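/- arXiv:2110.10756 — 8 statements merged into one kernel-verified Lean document; each statement's English description precedes it below -/
import Mathlib

section
/- Let λ = (λ_1,...,λ_M) with 0 ≤ λ_1 ≤ ... ≤ λ_M, let β ∈ ℕ^M be a weight vector with Σ_i β_i = Σ_i λ_i, and let β′ be obtained from β by swapping two consecutive entries β_i and β_{i+1}. Then there is a bijection between the set of semistandard Young tableaux of shape λ with entries in {1,...,M} and weight vector β and the set of semistandard Young tableaux of shape λ with entries in {1,...,M} and weight vector β′; in particular these two sets have the same cardinality. -/
/-- Predicate: `e` is a semistandard filling of shape `lam` (sorted nondecreasingly),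
where row `i` (0-indexed from the top) has `lam i.rev` boxes, entries are in `Fin M`,
rows weakly increase and columns strictly increase downwards. -/
def IsSSYT {M : ℕ} (lam : Fin M → ℕ) (e : ∀ i : Fin M, Fin (lam i.rev) → Fin M) : Prop :=
  (∀ (i : Fin M) (j j' : Fin (lam i.rev)), j ≤ j' → e i j ≤ e i j') ∧
  (∀ (i i' : Fin M), i < i' → ∀ (j : Fin (lam i'.rev)) (hj : (j : ℕ) < lam i.rev),
      e i ⟨j, hj⟩ < e i' j)

instance {M : ℕ} (lam : Fin M → ℕ) : DecidablePred (IsSSYT lam) := fun _ => by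
  unfold IsSSYT; infer_instance

/-- Semistandard Young tableaux of shape `lam` (sorted nondecreasingly) with entries in `Fin M`. -/
def SSYT (M : ℕ) (lam : Fin M → ℕ) : Type :=
  {e : ∀ i : Fin M, Fin (lam i.rev) → Fin M // IsSSYT lam e}

instance {M : ℕ} (lam : Fin M → ℕ) : Fintype (SSYT M lam) :=
  Subtype.fintype _

/-- The weight vector of a tableau: `T.weight k` is the number of boxes containing entry `k`. -/
def SSYT.weight {M : ℕ} {lam : Fin M → ℕ} (T : SSYT M lam) (k : Fin M) : ℕ :=
  ∑ i : Fin M, (Finset.univ.filter fun j : Fin (lam i.rev) => T.1 i j = k).card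

/-- The Schur polynomial of shape `lam` via Young's rule (sum over all SSYTs of the
monomials given by the weight vectors). -/
noncomputable def schur (M : ℕ) (lam : Fin M → ℕ) (z : Fin M → ℂ) : ℂ :=
  ∑ T : SSYT M lam, ∏ i : Fin M, z i ^ T.weight i

/-! The bijection is the Bender–Knuth involution. A filling with weakly increasing rows is
determined by the numbers `rowCount e n r` of entries `< r` in its rows, and its columns strictly
increase iff `rowCount e n' (r + 1) ≤ rowCount e n r` whenever `n < n'`. In each row, the entries
`v` and `v + 1` that have no `v + 1` below them and no `v` above them form a block; reversing the
numbers of `v`'s and `(v + 1)`'s in every such block changes only the counts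
`rowCount e n (v + 1)`, preserves these inequalities, undoes itself, and exchanges the total
numbers of `v`'s and `(v + 1)`'s. -/

open Finset

theorem Fin.val_lt_card_filter_iff {n : ℕ} {P : Fin n → Prop} [DecidablePred P]
    (hP : Antitone P) (p : Fin n) : (p : ℕ) < #{q | P q} ↔ P p := by
  constructor
  · intro hlt
    by_contra hp
    have hsub : ({q | P q} : Finset (Fin n)) ⊆ Iio p := fun q hq =>
      mem_Iio.2 (lt_of_not_ge fun hpq => hp (hP hpq (mem_filter.1 hq).2))
    have := card_le_card hsub
    rw [Fin.card_Iio] at this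
    omega
  · intro hp
    have hsub : Iic p ⊆ ({q | P q} : Finset (Fin n)) := fun q hq =>
      mem_filter.2 ⟨mem_univ q, hP (mem_Iic.1 hq) hp⟩
    have := card_le_card hsub
    rw [Fin.card_Iic] at this
    omega

section RowCount

variable {M : ℕ} {lam : Fin M → ℕ} {e e' : ∀ i : Fin M, Fin (lam i.rev) → Fin M}

/-- Rows `n ≥ M` count as empty, so that the first and last rows need no special case. -/
def rowCount (e : ∀ i : Fin M, Fin (lam i.rev) → Fin M) (n r : ℕ) : ℕ :=
  if h : n < M then #{p : Fin (lam (Fin.rev ⟨n, h⟩)) | (e ⟨n, h⟩ p : ℕ) < r} else 0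

theorem rowCount_fin (j : Fin M) (r : ℕ) :
    rowCount e j r = #{p : Fin (lam j.rev) | (e j p : ℕ) < r} := by
  simp [rowCount]

theorem rowCount_of_le {n : ℕ} (h : M ≤ n) (r : ℕ) : rowCount e n r = 0 := by
  simp [rowCount, not_lt.2 h]

theorem rowCount_le_length (j : Fin M) (r : ℕ) : rowCount e j r ≤ lam j.rev := by
  rw [rowCount_fin]
  exact (card_filter_le _ _).trans_eq (card_fin _)

theorem rowCount_mono (n : ℕ) : Monotone (rowCount e n) := by
  intro r r' h
  unfold rowCount
  split_ifs
  · exact card_le_card (monotone_filter_right _ fun _ _ hp => lt_of_lt_of_le hp h)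
  · exact le_rfl

theorem val_lt_rowCount_iff {j : Fin M} (hrow : Monotone (e j)) (r : ℕ) (p : Fin (lam j.rev)) :
    (p : ℕ) < rowCount e j r ↔ (e j p : ℕ) < r := by
  rw [rowCount_fin]
  exact Fin.val_lt_card_filter_iff (P := fun q => (e j q : ℕ) < r)
    (fun _ _ hqp hq => lt_of_le_of_lt (hrow hqp) hq) p

theorem card_filter_eq_rowCount_sub (j k : Fin M) :
    #{p : Fin (lam j.rev) | e j p = k} = rowCount e j (k + 1) - rowCount e j k := by
  rw [rowCount_fin, rowCount_fin,
    ← card_sdiff_of_subset (monotone_filter_right _ fun _ _ h => by omega)]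
  congr 1
  ext p
  simp only [mem_sdiff, mem_filter, mem_univ, true_and, Fin.ext_iff]
  omega

theorem eq_of_rowCount_eq (he : ∀ j, Monotone (e j)) (he' : ∀ j, Monotone (e' j))
    (h : ∀ n r, rowCount e n r = rowCount e' n r) : e = e' := by
  funext j p
  refine Fin.ext (eq_of_forall_gt_iff fun r => ?_)
  rw [← val_lt_rowCount_iff (he j), ← val_lt_rowCount_iff (he' j), h]

theorem rowCount_succ_le_of_lt (hlam : Monotone lam) (he : IsSSYT lam e) {n n' : ℕ} (h : n < n')
    (r : ℕ) : rowCount e n' (r + 1) ≤ rowCount e n r := by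
  rcases lt_or_ge n' M with hn' | hn'
  · obtain ⟨j', rfl⟩ : ∃ j' : Fin M, (j' : ℕ) = n' := ⟨⟨n', hn'⟩, rfl⟩
    obtain ⟨j, rfl⟩ : ∃ j : Fin M, (j : ℕ) = n := ⟨⟨n, h.trans j'.isLt⟩, rfl⟩
    have hlen : lam j'.rev ≤ lam j.rev := hlam (Fin.rev_le_rev.2 h.le)
    rw [rowCount_fin, rowCount_fin]
    refine card_le_card_of_injOn (Fin.castLE hlen) (fun p hp => ?_)
      (Fin.castLE_injective hlen).injOn
    have hcol := he.2 j j' h p (lt_of_lt_of_le p.2 hlen)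
    simp only [coe_filter, mem_univ, true_and] at hp ⊢
    rw [Fin.lt_def] at hcol
    exact lt_of_lt_of_le hcol (Nat.lt_succ_iff.1 hp)
  · rw [rowCount_of_le hn']
    exact Nat.zero_le _

theorem rowCount_le_of_le (hlam : Monotone lam) (he : IsSSYT lam e) {n n' : ℕ} (h : n ≤ n')
    (r : ℕ) : rowCount e n' r ≤ rowCount e n r := by
  rcases h.eq_or_lt with rfl | h
  · exact le_rfl
  · exact (rowCount_mono n' r.le_succ).trans (rowCount_succ_le_of_lt hlam he h r)

theorem IsSSYT.of_rowCount (hrow : ∀ j, Monotone (e j))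
    (hcol : ∀ n n', n < n' → ∀ r, rowCount e n' (r + 1) ≤ rowCount e n r) :
    IsSSYT lam e := by
  refine ⟨hrow, fun j j' h p hp => ?_⟩
  have hp' : (p : ℕ) < rowCount e j' (e j' p + 1) :=
    (val_lt_rowCount_iff (hrow j') _ p).2 (Nat.lt_succ_self _)
  exact (val_lt_rowCount_iff (hrow j) _ ⟨p, hp⟩).1 (lt_of_lt_of_le hp' (hcol j j' h _))

def totalCount (e : ∀ i : Fin M, Fin (lam i.rev) → Fin M) (r : ℕ) : ℕ :=
  ∑ n ∈ range M, rowCount e n r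

theorem totalCount_mono : Monotone (totalCount e) :=
  fun _ _ h => sum_le_sum fun n _ => rowCount_mono n h

theorem SSYT.weight_eq_totalCount_sub (T : SSYT M lam) (k : Fin M) :
    T.weight k = totalCount T.1 (k + 1) - totalCount T.1 k := by
  rw [totalCount, totalCount, ← sum_tsub_distrib _ fun n _ => rowCount_mono n (Nat.le_succ k),
    ← Fin.sum_univ_eq_sum_range]
  exact sum_congr rfl fun j _ => card_filter_eq_rowCount_sub j k

end RowCount

namespace BenderKnuth

variable {M : ℕ} {lam : Fin M → ℕ} {e : ∀ i : Fin M, Fin (lam i.rev) → Fin M} {v : ℕ}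

/- Row `n` holds its `v`'s and `(v + 1)`'s at the positions from `rowCount e n v` to
`rowCount e n (v + 2)`; the unpaired ones are those from `freeStart` to `freeEnd`, and after the
involution the `(v + 1)`'s start at `boundary`. -/
variable (e v) in
def freeStart (n : ℕ) : ℕ :=
  max (rowCount e n v) (rowCount e (n + 1) (v + 2))

variable (e v) in
def freeEnd : ℕ → ℕ
  | 0 => rowCount e 0 (v + 2)
  | n + 1 => min (rowCount e (n + 1) (v + 2)) (rowCount e n v)

variable (e v) in
def boundary (n : ℕ) : ℕ :=
  freeStart e v n + freeEnd e v n - rowCount e n (v + 1)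

variable (e) in
def bk (hv : v + 1 < M) : ∀ j : Fin M, Fin (lam j.rev) → Fin M := fun j p =>
  if v ≤ (e j p : ℕ) ∧ (e j p : ℕ) ≤ v + 1 then
    if (p : ℕ) < boundary e v j then ⟨v, by omega⟩ else ⟨v + 1, hv⟩
  else e j p

theorem freeStart_le (hlam : Monotone lam) (he : IsSSYT lam e) (n : ℕ) :
    freeStart e v n ≤ rowCount e n (v + 1) :=
  max_le (rowCount_mono n v.le_succ) (rowCount_succ_le_of_lt hlam he n.lt_succ_self (v + 1))

theorem le_freeEnd (hlam : Monotone lam) (he : IsSSYT lam e) (n : ℕ) :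
    rowCount e n (v + 1) ≤ freeEnd e v n := by
  cases n with
  | zero => exact rowCount_mono 0 (v + 1).le_succ
  | succ n =>
    exact le_min (rowCount_mono _ (v + 1).le_succ) (rowCount_succ_le_of_lt hlam he n.lt_succ_self v)

theorem freeEnd_le (n : ℕ) : freeEnd e v n ≤ rowCount e n (v + 2) := by
  cases n with
  | zero => exact le_rfl
  | succ n => exact min_le_left _ _

theorem boundary_add_rowCount (hlam : Monotone lam) (he : IsSSYT lam e) (n : ℕ) :
    boundary e v n + rowCount e n (v + 1) = freeStart e v n + freeEnd e v n := by
  have := freeStart_le (v := v) hlam he n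
  have := le_freeEnd (v := v) hlam he n
  unfold boundary
  omega

theorem freeStart_le_boundary (hlam : Monotone lam) (he : IsSSYT lam e) (n : ℕ) :
    freeStart e v n ≤ boundary e v n := by
  have := boundary_add_rowCount (v := v) hlam he n
  have := le_freeEnd (v := v) hlam he n
  omega

theorem boundary_le_freeEnd (hlam : Monotone lam) (he : IsSSYT lam e) (n : ℕ) :
    boundary e v n ≤ freeEnd e v n := by
  have := boundary_add_rowCount (v := v) hlam he n
  have := freeStart_le (v := v) hlam he n
  omega

theorem bk_val (hv : v + 1 < M) (j : Fin M) (p : Fin (lam j.rev)) :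
    (bk e hv j p : ℕ) =
      if v ≤ (e j p : ℕ) ∧ (e j p : ℕ) ≤ v + 1 then
        if (p : ℕ) < boundary e v j then v else v + 1
      else e j p := by
  unfold bk
  split_ifs <;> rfl

theorem bk_val_lt_iff (hv : v + 1 < M) {r : ℕ} (hr : r ≠ v + 1) (j : Fin M)
    (p : Fin (lam j.rev)) :
    (bk e hv j p : ℕ) < r ↔ (e j p : ℕ) < r := by
  rw [bk_val]
  split_ifs <;> omega

theorem bk_val_lt_succ_iff (hlam : Monotone lam) (he : IsSSYT lam e) (hv : v + 1 < M) (j : Fin M)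
    (p : Fin (lam j.rev)) : (bk e hv j p : ℕ) < v + 1 ↔ (p : ℕ) < boundary e v j := by
  have hlow : rowCount e j v ≤ boundary e v j :=
    (le_max_left _ _).trans (freeStart_le_boundary hlam he j)
  have hhigh : boundary e v j ≤ rowCount e j (v + 2) :=
    (boundary_le_freeEnd hlam he j).trans (freeEnd_le j)
  have hlt := val_lt_rowCount_iff (he.1 j) v p
  have hlt₂ := val_lt_rowCount_iff (he.1 j) (v + 2) p
  rw [bk_val]
  split_ifs <;> omega

theorem rowCount_bk_of_ne (hv : v + 1 < M) {r : ℕ} (hr : r ≠ v + 1) (n : ℕ) :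
    rowCount (bk e hv) n r = rowCount e n r := by
  unfold rowCount
  split_ifs
  · exact congrArg card (filter_congr fun p _ => bk_val_lt_iff hv hr _ p)
  · rfl

theorem rowCount_bk_succ (hlam : Monotone lam) (he : IsSSYT lam e) (hv : v + 1 < M) (n : ℕ) :
    rowCount (bk e hv) n (v + 1) = boundary e v n := by
  rcases lt_or_ge n M with hn | hn
  · obtain ⟨j, rfl⟩ : ∃ j : Fin M, (j : ℕ) = n := ⟨⟨n, hn⟩, rfl⟩
    have hlen : boundary e v j ≤ lam j.rev :=
      ((boundary_le_freeEnd hlam he j).trans (freeEnd_le j)).trans (rowCount_le_length j _)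
    rw [rowCount_fin, filter_congr fun p _ => bk_val_lt_succ_iff hlam he hv j p,
      Fin.card_filter_val_lt, min_eq_right hlen]
  · have := (boundary_le_freeEnd hlam he n).trans (freeEnd_le (v := v) n)
    rw [rowCount_of_le hn] at this ⊢
    omega

theorem bk_monotone (he : ∀ j, Monotone (e j)) (hv : v + 1 < M) (j : Fin M) :
    Monotone (bk e hv j) := by
  intro p q hpq
  have hepq := he j hpq
  rw [Fin.le_def] at hpq hepq ⊢
  rw [bk_val, bk_val]
  split_ifs <;> omega

theorem isSSYT_bk (hlam : Monotone lam) (he : IsSSYT lam e) (hv : v + 1 < M) :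
    IsSSYT lam (bk e hv) := by
  refine IsSSYT.of_rowCount (bk_monotone he.1 hv) fun n n' h r => ?_
  obtain rfl | rfl | hr : r = v ∨ r = v + 1 ∨ (r ≠ v ∧ r ≠ v + 1) := by omega
  · rw [rowCount_bk_succ hlam he hv, rowCount_bk_of_ne hv (r := r) (by omega)]
    obtain ⟨m, rfl⟩ : ∃ m, n' = m + 1 := ⟨n' - 1, by omega⟩
    calc boundary e r (m + 1) ≤ freeEnd e r (m + 1) := boundary_le_freeEnd hlam he _
      _ ≤ rowCount e m r := min_le_right _ _
      _ ≤ rowCount e n r := rowCount_le_of_le hlam he (by omega) r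
  · rw [rowCount_bk_of_ne hv (by omega), rowCount_bk_succ hlam he hv]
    calc rowCount e n' (v + 2) ≤ rowCount e (n + 1) (v + 2) := rowCount_le_of_le hlam he h _
      _ ≤ freeStart e v n := le_max_right _ _
      _ ≤ boundary e v n := freeStart_le_boundary hlam he n
  · rw [rowCount_bk_of_ne hv (by omega), rowCount_bk_of_ne hv hr.2]
    exact rowCount_succ_le_of_lt hlam he h r

theorem freeStart_bk (hv : v + 1 < M) (n : ℕ) : freeStart (bk e hv) v n = freeStart e v n := by
  rw [freeStart, freeStart, rowCount_bk_of_ne hv (r := v) (by omega),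
    rowCount_bk_of_ne hv (r := v + 2) (by omega)]

theorem freeEnd_bk (hv : v + 1 < M) (n : ℕ) : freeEnd (bk e hv) v n = freeEnd e v n := by
  cases n <;> simp only [freeEnd, rowCount_bk_of_ne hv (r := v) (by omega),
    rowCount_bk_of_ne hv (r := v + 2) (by omega)]

theorem boundary_bk (hlam : Monotone lam) (he : IsSSYT lam e) (hv : v + 1 < M) (n : ℕ) :
    boundary (bk e hv) v n = rowCount e n (v + 1) := by
  have := boundary_add_rowCount (v := v) hlam he n
  rw [boundary, freeStart_bk, freeEnd_bk, rowCount_bk_succ hlam he hv]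
  omega

theorem bk_bk (hlam : Monotone lam) (he : IsSSYT lam e) (hv : v + 1 < M) :
    bk (bk e hv) hv = e := by
  have he' := isSSYT_bk hlam he hv
  refine eq_of_rowCount_eq (bk_monotone he'.1 hv) he.1 fun n r => ?_
  rcases eq_or_ne r (v + 1) with rfl | hr
  · rw [rowCount_bk_succ hlam he' hv, boundary_bk hlam he hv]
  · rw [rowCount_bk_of_ne hv hr, rowCount_bk_of_ne hv hr]

variable (e v) in
theorem sum_freeStart_add_sum_freeEnd (N : ℕ) :
    ∑ n ∈ range N, freeStart e v n + ∑ n ∈ range (N + 1), freeEnd e v n =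
      ∑ n ∈ range N, rowCount e n v + ∑ n ∈ range (N + 1), rowCount e n (v + 2) := by
  induction N with
  | zero => simp [freeEnd]
  | succ N ih =>
    rw [sum_range_succ (fun n => freeStart e v n), sum_range_succ (fun n => freeEnd e v n),
      sum_range_succ (fun n => rowCount e n v), sum_range_succ (fun n => rowCount e n (v + 2))]
    have hstep : freeStart e v N + freeEnd e v (N + 1) =
        rowCount e N v + rowCount e (N + 1) (v + 2) := by
      rw [freeStart, freeEnd, min_comm]
      exact max_add_min _ _
    omega

theorem totalCount_bk_succ (hlam : Monotone lam) (he : IsSSYT lam e) (hv : v + 1 < M) :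
    totalCount (bk e hv) (v + 1) + totalCount e (v + 1) =
      totalCount e v + totalCount e (v + 2) := by
  have hlast : freeEnd e v M = 0 :=
    Nat.eq_zero_of_le_zero ((freeEnd_le M).trans (rowCount_of_le le_rfl _).le)
  have htel := sum_freeStart_add_sum_freeEnd e v M
  rw [sum_range_succ (fun n => freeEnd e v n), sum_range_succ (fun n => rowCount e n (v + 2)),
    hlast, rowCount_of_le le_rfl, add_zero, add_zero] at htel
  simp only [totalCount, rowCount_bk_succ hlam he hv, ← sum_add_distrib,
    boundary_add_rowCount hlam he] at htel ⊢
  simpa only [sum_add_distrib] using htel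

theorem totalCount_bk_of_ne (hv : v + 1 < M) {r : ℕ} (hr : r ≠ v + 1) :
    totalCount (bk e hv) r = totalCount e r :=
  sum_congr rfl fun n _ => rowCount_bk_of_ne hv hr n

end BenderKnuth

namespace SSYT

open BenderKnuth

variable {M : ℕ} {lam : Fin M → ℕ}

def benderKnuth (hlam : Monotone lam) {v : ℕ} (hv : v + 1 < M) (T : SSYT M lam) : SSYT M lam :=
  ⟨bk T.1 hv, isSSYT_bk hlam T.2 hv⟩

theorem benderKnuth_involutive (hlam : Monotone lam) {v : ℕ} (hv : v + 1 < M) :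
    Function.Involutive (benderKnuth hlam hv) :=
  fun T => Subtype.ext (bk_bk hlam T.2 hv)

theorem weight_benderKnuth (hlam : Monotone lam) {v : ℕ} (hv : v + 1 < M) (T : SSYT M lam) :
    (benderKnuth hlam hv T).weight = T.weight ∘ Equiv.swap ⟨v, by omega⟩ ⟨v + 1, hv⟩ := by
  funext k
  have hsum := totalCount_bk_succ hlam T.2 hv
  have hmono₁ : totalCount T.1 v ≤ totalCount T.1 (v + 1) := totalCount_mono (by omega)
  have hmono₂ : totalCount T.1 (v + 1) ≤ totalCount T.1 (v + 2) := totalCount_mono (by omega)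
  rw [Function.comp_apply, weight_eq_totalCount_sub, weight_eq_totalCount_sub]
  change totalCount (bk T.1 hv) (k + 1) - totalCount (bk T.1 hv) k = _
  rcases eq_or_ne k ⟨v, by omega⟩ with rfl | hkv
  · simp only [Equiv.swap_apply_left, Fin.val_mk, add_assoc, Nat.reduceAdd]
    rw [totalCount_bk_of_ne hv (r := v) (by omega)]
    omega
  rcases eq_or_ne k ⟨v + 1, hv⟩ with rfl | hkv'
  · simp only [Equiv.swap_apply_right, Fin.val_mk, add_assoc, Nat.reduceAdd]
    rw [totalCount_bk_of_ne hv (r := v + 2) (by omega)]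
    omega
  have hkv : (k : ℕ) ≠ v := fun h => hkv (Fin.ext h)
  have hkv' : (k : ℕ) ≠ v + 1 := fun h => hkv' (Fin.ext h)
  rw [Equiv.swap_apply_of_ne_of_ne ‹_› ‹_›, totalCount_bk_of_ne hv (by omega),
    totalCount_bk_of_ne hv hkv']

def weightSwapEquiv (hlam : Monotone lam) {v : ℕ} (hv : v + 1 < M) (β : Fin M → ℕ) :
    {T : SSYT M lam // T.weight = β} ≃
      {T : SSYT M lam // T.weight = β ∘ Equiv.swap ⟨v, by omega⟩ ⟨v + 1, hv⟩} :=
  ((benderKnuth_involutive hlam hv).toPerm _).subtypeEquiv fun T => by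
    rw [Function.Involutive.coe_toPerm, weight_benderKnuth]
    exact (Equiv.swap _ _).surjective.injective_comp_right.eq_iff.symm

end SSYT

theorem ssyt_weight_swap_bijection_general (M : ℕ) (lam : Fin M → ℕ) (hlam : Monotone lam)
    (β : Fin M → ℕ)
    (i : Fin M) (hi : (i : ℕ) + 1 < M) :
    Nonempty
      ({T : SSYT M lam // T.weight = β} ≃
        {T : SSYT M lam // T.weight = β ∘ Equiv.swap i ⟨(i : ℕ) + 1, hi⟩}) ∧
    Nat.card {T : SSYT M lam // T.weight = β} =
      Nat.card {T : SSYT M lam // T.weight = β ∘ Equiv.swap i ⟨(i : ℕ) + 1, hi⟩} :=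
  ⟨⟨SSYT.weightSwapEquiv hlam hi β⟩, Nat.card_congr (SSYT.weightSwapEquiv hlam hi β)⟩

/-- Swapping two consecutive entries of a weight vector yields a bijection between
the corresponding sets of semistandard Young tableaux of shape `lam`; in particular
the two sets have the same cardinality. -/
theorem ssyt_weight_swap_bijection (M : ℕ) (lam : Fin M → ℕ) (hlam : Monotone lam)
    (β : Fin M → ℕ) (hβ : ∑ i : Fin M, β i = ∑ i : Fin M, lam i)
    (i : Fin M) (hi : (i : ℕ) + 1 < M) :
    Nonempty
      ({T : SSYT M lam // T.weight = β} ≃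
        {T : SSYT M lam // T.weight = β ∘ Equiv.swap i ⟨(i : ℕ) + 1, hi⟩}) ∧
    Nat.card {T : SSYT M lam // T.weight = β} =
      Nat.card {T : SSYT M lam // T.weight = β ∘ Equiv.swap i ⟨(i : ℕ) + 1, hi⟩} :=
  ssyt_weight_swap_bijection_general M lam hlam β i hi
end

section
/- Let λ = (λ_1,...,λ_M) with 0 ≤ λ_1 ≤ ... ≤ λ_M. If there exists a semistandard Young tableau T of shape λ with entries in {1,...,M} and weight vector α(T) = (α_1(T),...,α_M(T)), then for every permutation τ of {1,...,M} there exists a semistandard Young tableau T′ of shape λ with entries in {1,...,M} whose weight vector is the permuted vector (α_{τ^{-1}(1)}(T),...,α_{τ^{-1}(M)}(T)). -/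
/-!
Encode a tableau by `w b i`, the number of its entries `< b` in row `i` (a Gelfand–Tsetlin
pattern). Column strictness becomes the interlacing `w (b + 1) (i + 1) ≤ w b i`, so the constraints
on the layer `w (a + 1)` read `max (w a i) (w (a + 2) (i + 1)) ≤ w (a + 1) i` and
`w (a + 1) i ≤ min (w (a + 2) i) (w a (i - 1))`, with bounds not involving that layer. Reflecting
each `w (a + 1) i` in its interval (the Bender–Knuth involution) gives another pattern of the same
shape, and since `max x y + min x y = x + y` the interval ends telescope over the rows: with
`S b = ∑ i, w b i`, the new layer sum is `S a + S (a + 2) - S (a + 1)`, which exchanges the numbers of `a`s and `a + 1`s.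
Adjacent transpositions generate the symmetric group.
-/

open Finset

theorem card_filter_succ_le_lt_iff {f : ℕ → ℕ} (hf : Monotone f) (hf0 : f 0 = 0) {N b : ℕ}
    (hb : b ≤ N) (j : ℕ) : #{c ∈ range N | f (c + 1) ≤ j} < b ↔ j < f b := by
  constructor
  · intro hcard
    by_contra! hj
    have hsub : range b ⊆ {c ∈ range N | f (c + 1) ≤ j} := fun c hc => by
      rw [mem_range] at hc
      exact mem_filter.mpr ⟨mem_range.mpr (by omega), (hf (by omega : c + 1 ≤ b)).trans hj⟩
    have := card_le_card hsub
    rw [card_range] at this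
    omega
  · intro hj
    have hb0 : b ≠ 0 := by rintro rfl; omega
    have hsub : {c ∈ range N | f (c + 1) ≤ j} ⊆ range (b - 1) := fun c hc => by
      rw [mem_filter] at hc
      rw [mem_range]
      by_contra! hcb
      exact absurd (hf (by omega : b ≤ c + 1)) (by omega)
    have := card_le_card hsub
    rw [card_range] at this
    omega

/-- `w` is the pattern of a tableau with entries `< N` and row lengths `len`. -/
structure IsGTPattern (N : ℕ) (len : ℕ → ℕ) (w : ℕ → ℕ → ℕ) : Prop where
  zero : ∀ i, w 0 i = 0
  le_succ : ∀ b i, w b i ≤ w (b + 1) i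
  top : ∀ i, w N i = len i
  succ_succ_le : ∀ b i, b < N → w (b + 1) (i + 1) ≤ w b i

/-- The entry at `(i, j)` of the tableau with pattern `w`. -/
def patternEntry (N : ℕ) (w : ℕ → ℕ → ℕ) (i j : ℕ) : ℕ := #{c ∈ range N | w (c + 1) i ≤ j}

def patternWeight (R : ℕ) (w : ℕ → ℕ → ℕ) (k : ℕ) : ℕ := ∑ i ∈ range R, (w (k + 1) i - w k i)

def bkLower (w : ℕ → ℕ → ℕ) (a i : ℕ) : ℕ := max (w a i) (w (a + 2) (i + 1))

def bkUpper (w : ℕ → ℕ → ℕ) (a : ℕ) : ℕ → ℕ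
  | 0 => w (a + 2) 0
  | i + 1 => min (w (a + 2) (i + 1)) (w a i)

def benderKnuth (w : ℕ → ℕ → ℕ) (a b i : ℕ) : ℕ :=
  if b = a + 1 then bkLower w a i + bkUpper w a i - w (a + 1) i else w b i

theorem bkUpper_le (w : ℕ → ℕ → ℕ) (a i : ℕ) : bkUpper w a i ≤ w (a + 2) i := by
  cases i with
  | zero => exact le_rfl
  | succ i => exact min_le_left _ _

theorem bkLower_add_bkUpper_succ (w : ℕ → ℕ → ℕ) (a i : ℕ) :
    bkLower w a i + bkUpper w a (i + 1) = w a i + w (a + 2) (i + 1) := by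
  rw [bkLower, bkUpper, add_comm, min_comm, min_add_max]

theorem benderKnuth_of_ne (w : ℕ → ℕ → ℕ) {a b : ℕ} (hb : b ≠ a + 1) :
    benderKnuth w a b = w b :=
  funext fun _ => if_neg hb

namespace IsGTPattern

variable {N : ℕ} {len : ℕ → ℕ} {w : ℕ → ℕ → ℕ}

theorem monotone (hw : IsGTPattern N len w) (i : ℕ) : Monotone (w · i) :=
  monotone_nat_of_le_succ fun b => hw.le_succ b i

theorem le_len (hw : IsGTPattern N len w) {b : ℕ} (hb : b ≤ N) (i : ℕ) : w b i ≤ len i :=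
  hw.top i ▸ hw.monotone i hb

theorem antitone (hw : IsGTPattern N len w) {b : ℕ} (hb : b ≤ N) : Antitone (w b) := by
  refine antitone_nat_of_succ_le fun i => ?_
  cases b with
  | zero => simp [hw.zero]
  | succ b => exact (hw.succ_succ_le b i hb).trans (hw.le_succ b i)

theorem succ_le_of_lt (hw : IsGTPattern N len w) {b i i' : ℕ} (hi : i < i') (hb : b < N) :
    w (b + 1) i' ≤ w b i :=
  (hw.antitone hb (show i + 1 ≤ i' from hi)).trans (hw.succ_succ_le b i hb)

theorem patternEntry_lt_iff (hw : IsGTPattern N len w) {b : ℕ} (hb : b ≤ N) (i j : ℕ) :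
    patternEntry N w i j < b ↔ j < w b i :=
  card_filter_succ_le_lt_iff (hw.monotone i) (hw.zero i) hb j

theorem patternEntry_lt_patternEntry (hw : IsGTPattern N len w) {i i' j : ℕ} (hi : i < i')
    (hj : j < len i') : patternEntry N w i j < patternEntry N w i' j := by
  set b := patternEntry N w i' j
  have hbN : b < N := (hw.patternEntry_lt_iff le_rfl i' j).mpr (hw.top i' ▸ hj)
  rw [hw.patternEntry_lt_iff hbN.le]
  exact ((hw.patternEntry_lt_iff hbN i' j).mp (lt_add_one b)).trans_le (hw.succ_le_of_lt hi hbN)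

theorem bkLower_le (hw : IsGTPattern N len w) {a : ℕ} (ha : a + 1 < N) (i : ℕ) :
    bkLower w a i ≤ w (a + 1) i :=
  max_le (hw.le_succ a i) (hw.succ_succ_le (a + 1) i ha)

theorem le_bkUpper (hw : IsGTPattern N len w) {a : ℕ} (ha : a + 1 < N) (i : ℕ) :
    w (a + 1) i ≤ bkUpper w a i := by
  cases i with
  | zero => exact hw.le_succ (a + 1) 0
  | succ i => exact le_min (hw.le_succ (a + 1) (i + 1)) (hw.succ_succ_le a i (by omega))

theorem patternWeight_eq (hw : IsGTPattern N len w) (R k : ℕ) :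
    patternWeight R w k = ∑ i ∈ range R, w (k + 1) i - ∑ i ∈ range R, w k i :=
  sum_tsub_distrib _ fun i _ => hw.le_succ k i

end IsGTPattern

section BenderKnuth

variable {N : ℕ} {len : ℕ → ℕ} {w : ℕ → ℕ → ℕ}

theorem bkLower_le_benderKnuth (hw : IsGTPattern N len w) {a : ℕ} (ha : a + 1 < N) (i : ℕ) :
    bkLower w a i ≤ benderKnuth w a (a + 1) i := by
  have := hw.le_bkUpper ha i
  rw [benderKnuth, if_pos rfl]
  omega

theorem benderKnuth_le_bkUpper (hw : IsGTPattern N len w) {a : ℕ} (ha : a + 1 < N) (i : ℕ) :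
    benderKnuth w a (a + 1) i ≤ bkUpper w a i := by
  have := hw.bkLower_le ha i
  rw [benderKnuth, if_pos rfl]
  omega

theorem isGTPattern_benderKnuth (hw : IsGTPattern N len w) {a : ℕ} (ha : a + 1 < N) :
    IsGTPattern N len (benderKnuth w a) := by
  refine ⟨fun i => ?_, fun b i => ?_, fun i => ?_, fun b i hb => ?_⟩
  · rw [benderKnuth_of_ne w (by omega), hw.zero]
  · rcases eq_or_ne b (a + 1) with rfl | hba
    · rw [benderKnuth_of_ne w (b := a + 2) (by omega)]
      exact (benderKnuth_le_bkUpper hw ha i).trans (bkUpper_le w a i)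
    rcases eq_or_ne b a with rfl | hba'
    · rw [benderKnuth_of_ne w (b := b) (by omega)]
      exact (le_max_left _ _).trans (bkLower_le_benderKnuth hw ha i)
    rw [benderKnuth_of_ne w hba, benderKnuth_of_ne w (b := b + 1) (by omega)]
    exact hw.le_succ b i
  · rw [benderKnuth_of_ne w (by omega), hw.top]
  · rcases eq_or_ne b (a + 1) with rfl | hba
    · rw [benderKnuth_of_ne w (b := a + 2) (by omega)]
      exact (le_max_right _ _).trans (bkLower_le_benderKnuth hw ha i)
    rcases eq_or_ne b a with rfl | hba'
    · rw [benderKnuth_of_ne w (b := b) (by omega)]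
      exact (benderKnuth_le_bkUpper hw ha (i + 1)).trans (min_le_right _ _)
    rw [benderKnuth_of_ne w hba, benderKnuth_of_ne w (b := b + 1) (by omega)]
    exact hw.succ_succ_le b i hb

theorem sum_benderKnuth_add_sum (hw : IsGTPattern N len w) {a : ℕ} (ha : a + 1 < N) {R : ℕ}
    (hR : len R = 0) :
    ∑ i ∈ range R, benderKnuth w a (a + 1) i + ∑ i ∈ range R, w (a + 1) i =
      ∑ i ∈ range R, w a i + ∑ i ∈ range R, w (a + 2) i := by
  have hrow (i : ℕ) : benderKnuth w a (a + 1) i + w (a + 1) i = bkLower w a i + bkUpper w a i := by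
    have := hw.bkLower_le ha i
    have := hw.le_bkUpper ha i
    rw [benderKnuth, if_pos rfl]
    omega
  have hshift : ∑ i ∈ range R, (bkLower w a i + bkUpper w a (i + 1)) =
      ∑ i ∈ range R, (w a i + w (a + 2) (i + 1)) :=
    sum_congr rfl fun i _ => bkLower_add_bkUpper_succ w a i
  have hupper : ∑ i ∈ range R, bkUpper w a i + bkUpper w a R =
      ∑ i ∈ range R, bkUpper w a (i + 1) + w (a + 2) 0 := by
    rw [← sum_range_succ, sum_range_succ']
    rfl
  have hlayer : ∑ i ∈ range R, w (a + 2) i + w (a + 2) R =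
      ∑ i ∈ range R, w (a + 2) (i + 1) + w (a + 2) 0 := by
    rw [← sum_range_succ, sum_range_succ']
  have hlast : bkUpper w a R ≤ w (a + 2) R := bkUpper_le w a R
  have hR' : w (a + 2) R = 0 := Nat.eq_zero_of_le_zero (hR ▸ hw.le_len (by omega) R)
  rw [← sum_add_distrib, sum_congr rfl fun i _ => hrow i]
  simp only [sum_add_distrib] at hshift ⊢
  omega

theorem patternWeight_benderKnuth (hw : IsGTPattern N len w) {a : ℕ} (ha : a + 1 < N) {R : ℕ}
    (hR : len R = 0) (k : ℕ) :
    patternWeight R (benderKnuth w a) k = patternWeight R w (Equiv.swap a (a + 1) k) := by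
  have hsum := sum_benderKnuth_add_sum hw ha hR
  have hmono (b : ℕ) : ∑ i ∈ range R, w b i ≤ ∑ i ∈ range R, w (b + 1) i :=
    sum_le_sum fun i _ => hw.le_succ b i
  have h0 : ∑ i ∈ range R, w a i ≤ ∑ i ∈ range R, w (a + 1) i := hmono a
  have h1 : ∑ i ∈ range R, w (a + 1) i ≤ ∑ i ∈ range R, w (a + 2) i := hmono (a + 1)
  rw [(isGTPattern_benderKnuth hw ha).patternWeight_eq, hw.patternWeight_eq]
  rcases eq_or_ne k a with rfl | hka
  · rw [Equiv.swap_apply_left, benderKnuth_of_ne w (b := k) (by omega)]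
    change _ = ∑ i ∈ range R, w (k + 2) i - _
    omega
  rcases eq_or_ne k (a + 1) with rfl | hkb
  · rw [Equiv.swap_apply_right, benderKnuth_of_ne w (b := a + 1 + 1) (by omega)]
    change ∑ i ∈ range R, w (a + 2) i - _ = _
    omega
  rw [Equiv.swap_apply_of_ne_of_ne hka hkb, benderKnuth_of_ne w hkb,
    benderKnuth_of_ne w (b := k + 1) (by omega)]

end BenderKnuth

namespace SSYT

variable {M : ℕ} {lam : Fin M → ℕ}

def rowLen (lam : Fin M → ℕ) (i : ℕ) : ℕ := if h : i < M then lam (Fin.rev ⟨i, h⟩) else 0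

theorem rowLen_self (lam : Fin M → ℕ) : rowLen lam M = 0 := by simp [rowLen]

def pattern (T : SSYT M lam) (b i : ℕ) : ℕ :=
  if h : i < M then #{j | (T.1 ⟨i, h⟩ j : ℕ) < b} else 0

theorem pattern_val (T : SSYT M lam) (b : ℕ) (i : Fin M) :
    T.pattern b i = #{j | (T.1 i j : ℕ) < b} := by
  simp [pattern]

theorem isGTPattern_pattern (hlam : Monotone lam) (T : SSYT M lam) :
    IsGTPattern M (rowLen lam) T.pattern := by
  refine ⟨fun i => ?_, fun b i => ?_, fun i => ?_, fun b i hb => ?_⟩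
  · simp [pattern]
  · unfold pattern
    split_ifs
    · exact card_le_card <| monotone_filter_right _ fun _ _ hj => Nat.lt_succ_of_lt hj
    · exact le_rfl
  · unfold pattern rowLen
    split_ifs
    · rw [filter_true_of_mem fun j _ => (T.1 _ j).isLt, card_univ, Fintype.card_fin]
    · rfl
  · unfold pattern
    split_ifs with hi1 hi0
    · set r₀ : Fin M := ⟨i, hi0⟩
      set r₁ : Fin M := ⟨i + 1, hi1⟩
      have hlt : r₀ < r₁ := Fin.mk_lt_mk.mpr (lt_add_one i)
      have hlen : lam r₁.rev ≤ lam r₀.rev := hlam (Fin.rev_le_rev.mpr hlt.le)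
      refine card_le_card_of_injOn (Fin.castLE hlen) (fun j hj => ?_)
        (Fin.castLE_injective hlen).injOn
      simp only [coe_filter, Set.mem_ofPred_eq, mem_univ, true_and] at hj ⊢
      have := T.2.2 r₀ r₁ hlt j (j.2.trans_le hlen)
      exact lt_of_lt_of_le (Fin.lt_def.mp this) (Nat.lt_succ_iff.mp hj)
    · omega
    · exact Nat.zero_le _
    · exact le_rfl

theorem weight_eq_patternWeight (T : SSYT M lam) (k : Fin M) :
    T.weight k = patternWeight M T.pattern k := by
  rw [patternWeight, ← Fin.sum_univ_eq_sum_range (fun i => T.pattern (k + 1) i - T.pattern k i)]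
  refine sum_congr rfl fun i _ => ?_
  have hsplit : #{j | (T.1 i j : ℕ) < k + 1} = #{j | (T.1 i j : ℕ) < k} + #{j | T.1 i j = k} := by
    simp only [card_filter, ← sum_add_distrib, Fin.ext_iff]
    refine sum_congr rfl fun j _ => ?_
    split_ifs <;> omega
  rw [pattern_val, pattern_val, hsplit, Nat.add_sub_cancel_left]

def ofPattern (w : ℕ → ℕ → ℕ) (hw : IsGTPattern M (rowLen lam) w) : SSYT M lam :=
  ⟨fun i j => ⟨patternEntry M w i j, (hw.patternEntry_lt_iff le_rfl i j).mpr <| by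
      simp [hw.top, rowLen]⟩,
    fun i j j' h => Fin.mk_le_mk.mpr <| card_le_card <| monotone_filter_right _
      fun _ _ hc => hc.trans (Fin.le_def.mp h),
    fun i i' h j _ => Fin.mk_lt_mk.mpr <| hw.patternEntry_lt_patternEntry h <| by
      simp [rowLen]⟩

theorem pattern_ofPattern {w : ℕ → ℕ → ℕ} (hw : IsGTPattern M (rowLen lam) w) {b : ℕ}
    (hb : b ≤ M) (i : ℕ) : (ofPattern w hw).pattern b i = w b i := by
  have hle := hw.le_len hb i
  unfold pattern
  split_ifs with hi
  · have hfilter : #{j | ((ofPattern w hw).1 ⟨i, hi⟩ j : ℕ) < b} =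
        #{j : Fin (lam (Fin.rev ⟨i, hi⟩)) | (j : ℕ) < w b i} :=
      congrArg card <| filter_congr fun j _ => hw.patternEntry_lt_iff hb i j
    rw [hfilter, Fin.card_filter_val_lt, min_eq_right (by simpa [rowLen, hi] using hle)]
  · simp [rowLen, hi] at hle
    omega

theorem weight_ofPattern {w : ℕ → ℕ → ℕ} (hw : IsGTPattern M (rowLen lam) w) (k : Fin M) :
    (ofPattern w hw).weight k = patternWeight M w k := by
  rw [weight_eq_patternWeight]
  exact sum_congr rfl fun i _ => by
    rw [pattern_ofPattern hw k.2 i, pattern_ofPattern hw k.2.le i]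

theorem exists_weight_swap (hlam : Monotone lam) (T : SSYT M lam) {a b : Fin M}
    (hab : (b : ℕ) = a + 1) :
    ∃ T' : SSYT M lam, ∀ k, T'.weight k = T.weight (Equiv.swap a b k) := by
  have hw := T.isGTPattern_pattern hlam
  have ha : (a : ℕ) + 1 < M := hab ▸ b.2
  refine ⟨ofPattern _ (isGTPattern_benderKnuth hw ha), fun k => ?_⟩
  rw [weight_ofPattern, patternWeight_benderKnuth hw ha (rowLen_self lam),
    weight_eq_patternWeight, ← hab, Fin.val_injective.swap_apply]

end SSYT

def weightPermSubmonoid (M : ℕ) (lam : Fin M → ℕ) : Submonoid (Equiv.Perm (Fin M)) where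
  carrier := {σ | ∀ T : SSYT M lam, ∃ T' : SSYT M lam, ∀ k, T'.weight k = T.weight (σ⁻¹ k)}
  one_mem' T := ⟨T, fun _ => rfl⟩
  mul_mem' {σ τ} hσ hτ T := by
    obtain ⟨T₁, h₁⟩ := hτ T
    obtain ⟨T₂, h₂⟩ := hσ T₁
    exact ⟨T₂, fun k => by rw [h₂, h₁, mul_inv_rev, Equiv.Perm.mul_apply]⟩

/-- If there is a semistandard Young tableau of shape `lam` with weight vector `α(T)`,
then for every permutation `τ` there is a semistandard Young tableau of shape `lam`
whose weight vector is the permuted vector `k ↦ α_{τ⁻¹ k}(T)`. -/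
theorem ssyt_weight_perm (M : ℕ) (lam : Fin M → ℕ) (hlam : Monotone lam)
    (T : SSYT M lam) (τ : Equiv.Perm (Fin M)) :
    ∃ T' : SSYT M lam, ∀ k : Fin M, T'.weight k = T.weight (τ⁻¹ k) := by
  cases M with
  | zero => exact ⟨T, fun k => k.elim0⟩
  | succ n =>
    have hgen : Submonoid.closure (Set.range fun i : Fin n => Equiv.swap i.castSucc i.succ) ≤
        weightPermSubmonoid (n + 1) lam := by
      rw [Submonoid.closure_le]
      rintro _ ⟨a, rfl⟩ U
      obtain ⟨U', hU'⟩ := SSYT.exists_weight_swap hlam U (a := a.castSucc) (Fin.val_succ a)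
      exact ⟨U', fun k => by rw [hU', Equiv.swap_inv]⟩
    exact hgen (Equiv.Perm.mclosure_swap_castSucc_succ n ▸ Submonoid.mem_top τ) T
end

section
/- (Mann) Let k ≥ 1, let a_1,...,a_k be nonzero integers, and let η_1,...,η_k be roots of unity with Σ_{i=1}^k a_i·η_i = 0. Then there exist a partition of {1,...,k} into nonempty blocks B_1,...,B_u, roots of unity ζ_1,...,ζ_u, and roots of unity ν_1,...,ν_k with the following properties: (i) η_i = ζ_j·ν_i for every j ∈ {1,...,u} and every i ∈ B_j; (ii) for every j, the sum Σ_{i ∈ B_j} a_i·ν_i = 0 is a minimal vanishing sum; (iii) every ν_i satisfies ν_i^n = 1 for some positive integer n that is a product of primes p, each satisfying p ≤ max_j |B_j|. -/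
/-!
Split the sum greedily into minimal vanishing subsums and treat one minimal sum
`∑_{i ∈ B} aᵢ νᵢ` of `n`-th roots of unity at a time. If a prime `p > |B|` divides `n`, write
`n = p^(A+1) m` with `p ∤ m` and `νᵢ = ω^Cᵢ zᵢ` with `ω` a primitive `p^(A+1)`-th root of unity
and `zᵢ^m = 1`. Only `|B| < p` values of the digit `⌊Cᵢ / p^A⌋ mod p` occur, so after a common
rotation all exponents `Cᵢ mod p^(A+1)` lie below `φ(p^(A+1))`, and these powers of `ω` are
linearly independent over `ℚ(ζₘ) ∋ zᵢ`. The sum therefore splits along the exponents, and minimality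
leaves a single exponent: up to one rotation, all `νᵢ` are `m`-th roots of unity. Induct on `n`.
-/

def IsRootOfUnity (z : ℂ) : Prop := ∃ n : ℕ, 0 < n ∧ z ^ n = 1

open IntermediateField Polynomial Finset

theorem Nat.exists_forall_add_mod_pow_succ_lt_totient {ι : Type*} (B : Finset ι) (C : ι → ℕ)
    {p : ℕ} (hp : p.Prime) (hB : #B < p) (A : ℕ) :
    ∃ t, ∀ i ∈ B, (C i + t) % p ^ (A + 1) < (p ^ (A + 1)).totient := by
  have : NeZero p := ⟨hp.ne_zero⟩
  obtain ⟨s, -, hs⟩ := exists_mem_notMem_of_card_lt_card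
    (s := B.image fun i => -((C i / p ^ A + 1 : ℕ) : ZMod p)) (t := univ)
    (by simpa using Finset.card_image_le.trans_lt hB)
  -- the shift by `p ^ A * s` keeps the `p ^ A`-digit of every `C i + t` away from `p - 1`
  refine ⟨p ^ A * s.val, fun i hi => ?_⟩
  have hpA : 0 < p ^ A := pow_pos hp.pos A
  have hdigit : (C i + p ^ A * s.val) % p ^ (A + 1) / p ^ A < p - 1 := by
    rw [pow_succ, Nat.mod_mul_right_div_self, Nat.add_mul_div_left _ _ hpA]
    refine lt_of_le_of_ne (Nat.le_pred_of_lt (Nat.mod_lt _ hp.pos)) fun heq => hs ?_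
    have := congrArg (fun n : ℕ => (n : ZMod p)) heq
    simp only [ZMod.natCast_mod, Nat.cast_add, ZMod.natCast_val, ZMod.cast_id', id,
      Nat.cast_sub hp.one_le, ZMod.natCast_self, Nat.cast_one, zero_sub] at this
    exact mem_image.2 ⟨i, hi, by push_cast; linear_combination -this⟩
  rw [Nat.div_lt_iff_lt_mul hpA] at hdigit
  rwa [Nat.totient_prime_pow_succ hp, mul_comm (p ^ A) (p - 1)]

theorem exists_eq_mul_of_pow_eq_one_of_coprime {G₀ : Type*} [CommGroupWithZero G₀] {x : G₀}
    (hx : x ≠ 0) {r m : ℕ} (hxrm : x ^ (r * m) = 1) (hrm : r.Coprime m) :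
    ∃ y z : G₀, y ^ r = 1 ∧ z ^ m = 1 ∧ x = y * z := by
  obtain ⟨u, v, huv⟩ := Nat.isCoprime_iff_coprime.2 hrm
  refine ⟨x ^ (v * m), x ^ (u * r), ?_, ?_, ?_⟩
  · rw [← zpow_natCast, ← zpow_mul, show v * m * r = (r * m : ℕ) * v by push_cast; ring,
      zpow_mul, zpow_natCast, hxrm, one_zpow]
  · rw [← zpow_natCast, ← zpow_mul, show u * r * m = (r * m : ℕ) * u by push_cast; ring,
      zpow_mul, zpow_natCast, hxrm, one_zpow]
  · rw [← zpow_add₀ hx, add_comm, huv, zpow_one]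

theorem IsPrimitiveRoot.totient_le_natDegree_minpoly_adjoin {L : Type*} [Field L] [CharZero L]
    {ω ξ : L} {r m : ℕ} (hω : IsPrimitiveRoot ω r) (hξ : IsPrimitiveRoot ξ m) (hr : 0 < r)
    (hm : 0 < m) (hrm : r.Coprime m) :
    r.totient ≤ (minpoly ℚ⟮ξ⟯ ω).natDegree := by
  have hωξ : IsPrimitiveRoot (ω * ξ) (r * m) := by
    rw [IsPrimitiveRoot.iff_orderOf, (Commute.all ω ξ).orderOf_mul_eq_mul_orderOf_of_coprime
      (by rwa [← hω.eq_orderOf, ← hξ.eq_orderOf]), ← hω.eq_orderOf, ← hξ.eq_orderOf]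
  have finrank_adjoin {μ : L} {k : ℕ} (hμ : IsPrimitiveRoot μ k) (hk : 0 < k) :
      Module.finrank ℚ ℚ⟮μ⟯ = k.totient := by
    rw [adjoin.finrank (hμ.isIntegral hk).tower_top, ← cyclotomic_eq_minpoly_rat hμ hk,
      natDegree_cyclotomic]
  set F := ℚ⟮ξ⟯
  have hωint : IsIntegral F ω := (hω.isIntegral hr).tower_top
  set E := F⟮ω⟯
  have : FiniteDimensional ℚ F := adjoin.finiteDimensional (hξ.isIntegral hm).tower_top
  have : FiniteDimensional F E := adjoin.finiteDimensional hωint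
  have : FiniteDimensional ℚ E := Module.Finite.trans F E
  have : FiniteDimensional ℚ (E.restrictScalars ℚ) := ‹FiniteDimensional ℚ E›
  have hle : ℚ⟮ω * ξ⟯ ≤ E.restrictScalars ℚ := by
    rw [adjoin_simple_le_iff]
    exact mul_mem (mem_adjoin_simple_self F ω) (E.algebraMap_mem ⟨ξ, mem_adjoin_simple_self ℚ ξ⟩)
  have key : m.totient * r.totient ≤ m.totient * (minpoly F ω).natDegree :=
    calc m.totient * r.totient = Module.finrank ℚ ℚ⟮ω * ξ⟯ := by
          rw [finrank_adjoin hωξ (Nat.mul_pos hr hm), Nat.totient_mul hrm, mul_comm]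
      _ ≤ Module.finrank ℚ (E.restrictScalars ℚ) := finrank_le_of_le_right hle
      _ = m.totient * (minpoly F ω).natDegree := by
          rw [← finrank_adjoin hξ hm, ← adjoin.finrank hωint]
          exact (Module.finrank_mul_finrank ℚ F E).symm
  exact Nat.le_of_mul_le_mul_left key (Nat.totient_pos.mpr hm)

theorem IntermediateField.sum_filter_eq_zero_of_sum_mul_pow_eq_zero {ι K L : Type*} [Field K]
    [Field L] [Algebra K L] (F : IntermediateField K L) {x : L} {B : Finset ι} {E : ι → ℕ}
    (hE : ∀ i ∈ B, E i < (minpoly F x).natDegree) {c : ι → L} (hc : ∀ i ∈ B, c i ∈ F)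
    (h : ∑ i ∈ B, c i * x ^ E i = 0) (j : ℕ) : ∑ i ∈ B with E i = j, c i = 0 := by
  set D := (minpoly F x).natDegree
  by_cases hj : j < D
  swap
  · rw [filter_false_of_mem fun i hi (hij : E i = j) => hj (hij ▸ hE i hi), sum_empty]
  let g : Fin D → F := fun k =>
    ⟨∑ i ∈ B with E i = k, c i, sum_mem fun i hi => hc i (mem_filter.1 hi).1⟩
  have hg : ∑ k, g k • x ^ (k : ℕ) = 0 := by
    rw [← h, ← sum_fiberwise_of_maps_to (g := E) (t := range D) fun i hi => mem_range.2 (hE i hi),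
      ← Fin.sum_univ_eq_sum_range (fun k => ∑ i ∈ B with E i = k, c i * x ^ E i)]
    refine sum_congr rfl fun k _ => ?_
    rw [Algebra.smul_def, IntermediateField.algebraMap_apply, sum_mul]
    exact sum_congr rfl fun i hi => by rw [(mem_filter.1 hi).2]
  have hind : LinearIndependent F fun k : Fin D => x ^ (k : ℕ) := linearIndependent_pow x
  simpa [g] using congrArg Subtype.val (Fintype.linearIndependent_iff.1 hind g hg ⟨j, hj⟩)

theorem IsPrimitiveRoot.sum_filter_eq_zero_of_sum_mul_pow_eq_zero {L ι : Type*} [Field L]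
    [CharZero L] {ω ξ : L} {r m : ℕ} (hω : IsPrimitiveRoot ω r) (hξ : IsPrimitiveRoot ξ m)
    (hr : 0 < r) (hm : 0 < m) (hrm : r.Coprime m) {B : Finset ι} {E : ι → ℕ}
    (hE : ∀ i ∈ B, E i < r.totient) {a : ι → ℤ} {z : ι → L} (hz : ∀ i ∈ B, z i ^ m = 1)
    (h : ∑ i ∈ B, a i * z i * ω ^ E i = 0) (j : ℕ) : ∑ i ∈ B with E i = j, (a i : L) * z i = 0 := by
  have : NeZero m := NeZero.of_pos hm
  refine ℚ⟮ξ⟯.sum_filter_eq_zero_of_sum_mul_pow_eq_zero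
    (fun i hi => (hE i hi).trans_le (hω.totient_le_natDegree_minpoly_adjoin hξ hr hm hrm))
    (fun i hi => ?_) h j
  obtain ⟨d, -, hd⟩ := hξ.eq_pow_of_pow_eq_one (hz i hi)
  exact mul_mem (intCast_mem _ _) (hd ▸ pow_mem (mem_adjoin_simple_self ℚ ξ) d)

theorem IsPrimitiveRoot.exists_eq_pow_div_pow_mul {K ι : Type*} [Field K] {p A m : ℕ} {ω : K}
    (hω : IsPrimitiveRoot ω (p ^ (A + 1))) (hp : p.Prime) (hm : 0 < m) (hpm : p.Coprime m)
    {B : Finset ι} (hpB : #B < p) {ν : ι → K} (hν : ∀ i ∈ B, ν i ^ (p ^ (A + 1) * m) = 1) :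
    ∃ (t : ℕ) (E : ι → ℕ) (z : ι → K), ∀ i ∈ B,
      E i < (p ^ (A + 1)).totient ∧ z i ^ m = 1 ∧ ν i = ω ^ E i / ω ^ t * z i := by
  set r := p ^ (A + 1)
  have hr : 0 < r := pow_pos hp.pos _
  have : NeZero r := NeZero.of_pos hr
  have hdec : ∀ i ∈ B, ∃ (C : ℕ) (z : K), z ^ m = 1 ∧ ν i = ω ^ C * z := by
    intro i hi
    have hνi0 : ν i ≠ 0 := ne_zero_pow (Nat.mul_pos hr hm).ne' ((hν i hi).symm ▸ one_ne_zero)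
    obtain ⟨y, z, hy, hz, hyz⟩ :=
      exists_eq_mul_of_pow_eq_one_of_coprime hνi0 (hν i hi) (hpm.pow_left _)
    obtain ⟨C, -, rfl⟩ := hω.eq_pow_of_pow_eq_one hy
    exact ⟨C, z, hz, hyz⟩
  choose! C z hz hνCz using hdec
  obtain ⟨t, ht⟩ := Nat.exists_forall_add_mod_pow_succ_lt_totient B C hp hpB A
  refine ⟨t, fun i => (C i + t) % r, z, fun i hi => ⟨ht i hi, hz i hi, ?_⟩⟩
  rw [hνCz i hi, ← pow_eq_pow_mod _ hω.pow_eq_one, pow_add,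
    mul_div_cancel_right₀ _ (pow_ne_zero _ (hω.ne_zero hr.ne'))]

structure IsMinimalVanishing {ι M : Type*} [AddCommMonoid M] (f : ι → M) (T : Finset ι) :
    Prop where
  nonempty : T.Nonempty
  sum_eq_zero : ∑ i ∈ T, f i = 0
  sum_ne_zero : ∀ S ⊆ T, S.Nonempty → S ≠ T → ∑ i ∈ S, f i ≠ 0

namespace IsMinimalVanishing

variable {ι : Type*}

section AddCommMonoid

variable {M : Type*} [AddCommMonoid M] {f g : ι → M} {S T : Finset ι}

theorem congr (h : IsMinimalVanishing f T) (hfg : ∀ i ∈ T, f i = g i) :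
    IsMinimalVanishing g T where
  nonempty := h.nonempty
  sum_eq_zero := by rw [← sum_congr rfl hfg, h.sum_eq_zero]
  sum_ne_zero S hST hS hne := by
    rw [← sum_congr rfl fun i hi => hfg i (hST hi)]
    exact h.sum_ne_zero S hST hS hne

theorem eq_of_subset (h : IsMinimalVanishing f T) (hST : S ⊆ T) (hS : S.Nonempty)
    (hsum : ∑ i ∈ S, f i = 0) : S = T :=
  of_not_not fun hne => h.sum_ne_zero S hST hS hne hsum

theorem eq_of_forall_sum_filter_eq_zero {β : Type*} [DecidableEq β] (h : IsMinimalVanishing f T)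
    {E : ι → β} (hE : ∀ j, ∑ i ∈ T with E i = j, f i = 0) : ∀ i ∈ T, ∀ i' ∈ T, E i = E i' := by
  intro i hi i' hi'
  have hfiber := h.eq_of_subset (filter_subset (E · = E i') T) ⟨i', mem_filter.2 ⟨hi', rfl⟩⟩
    (hE (E i'))
  rw [← hfiber] at hi
  exact (mem_filter.1 hi).2

end AddCommMonoid

theorem div_const {K : Type*} [DivisionSemiring K] {f : ι → K} {T : Finset ι}
    (h : IsMinimalVanishing f T) {c : K} (hc : c ≠ 0) :
    IsMinimalVanishing (fun i => f i / c) T where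
  nonempty := h.nonempty
  sum_eq_zero := by rw [← sum_div, h.sum_eq_zero, zero_div]
  sum_ne_zero S hST hS hne := by
    rw [← sum_div]
    exact div_ne_zero (h.sum_ne_zero S hST hS hne) hc

end IsMinimalVanishing

section Partition

variable {ι M : Type*} [AddCommMonoid M] {f : ι → M}

theorem exists_isMinimalVanishing_subset {S : Finset ι} (hS : S.Nonempty)
    (hsum : ∑ i ∈ S, f i = 0) : ∃ T ⊆ S, IsMinimalVanishing f T := by
  induction S using Finset.strongInduction with
  | H S ih =>
  by_cases hmin : ∀ T ⊆ S, T.Nonempty → T ≠ S → ∑ i ∈ T, f i ≠ 0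
  · exact ⟨S, subset_rfl, hS, hsum, hmin⟩
  push Not at hmin
  obtain ⟨T, hTS, hT, hne, hTsum⟩ := hmin
  obtain ⟨U, hUT, hU⟩ := ih T (ssubset_of_subset_of_ne hTS hne) hT hTsum
  exact ⟨U, hUT.trans hTS, hU⟩

theorem exists_finpartition_isMinimalVanishing [DecidableEq ι] {S : Finset ι}
    (hsum : ∑ i ∈ S, f i = 0) : ∃ P : Finpartition S, ∀ T ∈ P.parts, IsMinimalVanishing f T := by
  induction S using Finset.strongInduction with
  | H S ih =>
  obtain rfl | hS := S.eq_empty_or_nonempty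
  · exact ⟨Finpartition.empty _, by simp [Finpartition.empty]⟩
  obtain ⟨T, hTS, hT⟩ := exists_isMinimalVanishing_subset hS hsum
  have hrest : ∑ i ∈ S \ T, f i = 0 := by
    rwa [← sum_sdiff hTS, hT.sum_eq_zero, add_zero] at hsum
  obtain ⟨P, hP⟩ := ih (S \ T) (sdiff_ssubset hTS hT.nonempty) hrest
  refine ⟨P.extend hT.nonempty.ne_empty sdiff_disjoint (sdiff_union_of_subset hTS), ?_⟩
  simpa [Finpartition.extend] using ⟨hT, hP⟩

end Partition

section Rotation

variable {ι : Type*} {a : ι → ℤ} {ν : ι → ℂ} {B : Finset ι}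

theorem IsMinimalVanishing.exists_div_pow_eq_one_of_coprime
    (hmin : IsMinimalVanishing (fun i => (a i : ℂ) * ν i) B) {p A m : ℕ} (hp : p.Prime)
    (hm : 0 < m) (hpm : p.Coprime m) (hpB : #B < p)
    (hν : ∀ i ∈ B, ν i ^ (p ^ (A + 1) * m) = 1) :
    ∃ ζ : ℂ, ζ ^ (p ^ (A + 1) * m) = 1 ∧ ∀ i ∈ B, (ν i / ζ) ^ m = 1 := by
  set r := p ^ (A + 1)
  have hr : 0 < r := pow_pos hp.pos _
  obtain ⟨ω, hω⟩ : ∃ ω : ℂ, IsPrimitiveRoot ω r := ⟨_, Complex.isPrimitiveRoot_exp r hr.ne'⟩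
  obtain ⟨ξ, hξ⟩ : ∃ ξ : ℂ, IsPrimitiveRoot ξ m := ⟨_, Complex.isPrimitiveRoot_exp m hm.ne'⟩
  have hω0 : ω ≠ 0 := hω.ne_zero hr.ne'
  obtain ⟨t, E, z, hEz⟩ := hω.exists_eq_pow_div_pow_mul hp hm hpm hpB hν
  have hfiber := hω.sum_filter_eq_zero_of_sum_mul_pow_eq_zero hξ hr hm (hpm.pow_left _)
    (fun i hi => (hEz i hi).1) (fun i hi => (hEz i hi).2.1) (by
      rw [← mul_zero (ω ^ t), ← hmin.sum_eq_zero, mul_sum]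
      refine sum_congr rfl fun i hi => ?_
      rw [(hEz i hi).2.2]
      field_simp)
  have hconst := hmin.eq_of_forall_sum_filter_eq_zero (E := E) fun j => by
    rw [← mul_zero (ω ^ j / ω ^ t), ← hfiber j, mul_sum]
    refine sum_congr rfl fun i hi => ?_
    rw [(hEz i (mem_filter.1 hi).1).2.2, (mem_filter.1 hi).2]
    ring
  obtain ⟨i₀, hi₀⟩ := hmin.nonempty
  have hωpow (k : ℕ) : (ω ^ k) ^ (r * m) = 1 := by
    rw [← pow_mul, mul_left_comm, pow_mul, hω.pow_eq_one, one_pow]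
  refine ⟨ω ^ E i₀ / ω ^ t, by rw [div_pow, hωpow, hωpow, div_one], fun i hi => ?_⟩
  rw [(hEz i hi).2.2, hconst i hi i₀ hi₀,
    mul_div_cancel_left₀ _ (div_ne_zero (pow_ne_zero _ hω0) (pow_ne_zero _ hω0))]
  exact (hEz i hi).2.1

theorem IsMinimalVanishing.exists_div_pow_smooth_eq_one
    (hmin : IsMinimalVanishing (fun i => (a i : ℂ) * ν i) B) {n : ℕ} (hn : 0 < n)
    (hν : ∀ i ∈ B, ν i ^ n = 1) :
    ∃ ζ : ℂ, ζ ^ n = 1 ∧ ∃ N ∈ Nat.smoothNumbers (#B + 1), ∀ i ∈ B, (ν i / ζ) ^ N = 1 := by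
  induction n using Nat.strong_induction_on generalizing ν with
  | _ n ih =>
  by_cases hsmooth : n ∈ Nat.smoothNumbers (#B + 1)
  · exact ⟨1, one_pow n, n, hsmooth, by simpa using hν⟩
  obtain ⟨p, hp, hpn, hpB⟩ : ∃ p, p.Prime ∧ p ∣ n ∧ #B < p := by
    simpa [Nat.mem_smoothNumbers', Nat.lt_succ_iff] using hsmooth
  obtain ⟨A, hA⟩ : ∃ A, n.factorization p = A + 1 :=
    Nat.exists_eq_succ_of_ne_zero (hp.factorization_pos_of_dvd hn.ne' hpn).ne'
  have hn' : p ^ (A + 1) * ordCompl[p] n = n := hA ▸ Nat.ordProj_mul_ordCompl_eq_self n p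
  have hm := Nat.ordCompl_pos p hn.ne'
  obtain ⟨ζ₀, hζ₀, hν₀⟩ := hmin.exists_div_pow_eq_one_of_coprime hp hm
    (Nat.coprime_ordCompl hp hn.ne') hpB (hn' ▸ hν)
  rw [hn'] at hζ₀
  have hζ₀0 : ζ₀ ≠ 0 := ne_zero_pow hn.ne' (hζ₀ ▸ one_ne_zero)
  obtain ⟨ζ₁, hζ₁, N, hN, hνN⟩ := ih (ordCompl[p] n)
    ((lt_mul_left hm (Nat.one_lt_pow A.succ_ne_zero hp.one_lt)).trans_eq hn')
    (by simpa only [mul_div_assoc] using hmin.div_const hζ₀0) hm hν₀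
  refine ⟨ζ₀ * ζ₁, ?_, N, hN, fun i hi => by rw [← div_div]; exact hνN i hi⟩
  rw [mul_pow, hζ₀, one_mul, ← hn', mul_comm, pow_mul, hζ₁, one_pow]

end Rotation

theorem exists_forall_pow_eq_one_of_isRootOfUnity {ι : Type*} [Fintype ι] {η : ι → ℂ}
    (hη : ∀ i, IsRootOfUnity (η i)) : ∃ n, 0 < n ∧ ∀ i, η i ^ n = 1 := by
  choose N hN using hη
  refine ⟨∏ i, N i, prod_pos fun i _ => (hN i).1, fun i => ?_⟩
  obtain ⟨c, hc⟩ := dvd_prod_of_mem N (mem_univ i)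
  rw [hc, pow_mul, (hN i).2, one_pow]

theorem exists_finpartition_isMinimalVanishing_rotation {ι : Type*} [Fintype ι] [DecidableEq ι]
    {a : ι → ℤ} {η : ι → ℂ} {n : ℕ} (hn : 0 < n) (hη : ∀ i, η i ^ n = 1)
    (hsum : ∑ i, (a i : ℂ) * η i = 0) :
    ∃ (P : Finpartition (univ : Finset ι)) (ζ : Finset ι → ℂ) (ν : ι → ℂ), ∀ T ∈ P.parts,
      ζ T ^ n = 1 ∧ IsMinimalVanishing (fun i => (a i : ℂ) * ν i) T ∧
      ∀ i ∈ T, η i = ζ T * ν i ∧ ∃ N ∈ Nat.smoothNumbers (#T + 1), ν i ^ N = 1 := by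
  obtain ⟨P, hP⟩ := exists_finpartition_isMinimalVanishing hsum
  choose! ζ hζ N hN hηN using fun T hT =>
    (hP T hT).exists_div_pow_smooth_eq_one hn fun i _ => hη i
  refine ⟨P, ζ, fun i => η i / ζ (P.part i), fun T hT => ?_⟩
  have hζ0 : ζ T ≠ 0 := ne_zero_pow hn.ne' ((hζ T hT).symm ▸ one_ne_zero)
  refine ⟨hζ T hT, ((hP T hT).div_const hζ0).congr fun i hi => ?_, fun i hi => ?_⟩ <;>
    dsimp only <;> rw [P.part_eq_of_mem hT hi]
  · rw [mul_div_assoc]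
  · exact ⟨(mul_div_cancel₀ _ hζ0).symm, N T, hN T hT, hηN T hT i hi⟩

theorem mann_vanishing_sum_general (k : ℕ) (a : Fin k → ℤ)
    (η : Fin k → ℂ) (hη : ∀ i, IsRootOfUnity (η i))
    (hsum : ∑ i : Fin k, (a i : ℂ) * η i = 0) :
    ∃ (u : ℕ) (B : Fin u → Finset (Fin k)) (ζ : Fin u → ℂ) (ν : Fin k → ℂ),
      (∀ j, (B j).Nonempty) ∧
      (∀ j j', j ≠ j' → Disjoint (B j) (B j')) ∧
      (Finset.univ.biUnion B = Finset.univ) ∧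
      (∀ j, IsRootOfUnity (ζ j)) ∧
      (∀ i, IsRootOfUnity (ν i)) ∧
      (∀ j, ∀ i ∈ B j, η i = ζ j * ν i) ∧
      (∀ j, ∑ i ∈ B j, (a i : ℂ) * ν i = 0) ∧
      (∀ j, ∀ S ⊆ B j, S.Nonempty → S ≠ B j → ∑ i ∈ S, (a i : ℂ) * ν i ≠ 0) ∧
      (∀ i, ∃ n : ℕ, 0 < n ∧ ν i ^ n = 1 ∧
        ∀ p : ℕ, p.Prime → p ∣ n → ∃ j, p ≤ (B j).card) := by
  classical
  obtain ⟨n, hn, hηn⟩ := exists_forall_pow_eq_one_of_isRootOfUnity hη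
  obtain ⟨P, ζ, ν, hP⟩ := exists_finpartition_isMinimalVanishing_rotation hn hηn hsum
  have hpart (i : Fin k) : P.part i ∈ P.parts ∧ i ∈ P.part i :=
    ⟨P.part_mem.2 (mem_univ i), P.mem_part_self.2 (mem_univ i)⟩
  have hsmooth (i : Fin k) : ∃ N ∈ Nat.smoothNumbers (#(P.part i) + 1), ν i ^ N = 1 :=
    ((hP _ (hpart i).1).2.2 i (hpart i).2).2
  let e := P.parts.equivFin
  have hB (j) : (e.symm j : Finset (Fin k)) ∈ P.parts := (e.symm j).2
  refine ⟨#P.parts, fun j => e.symm j, fun j => ζ (e.symm j), ν,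
    fun j => (hP _ (hB j)).2.1.nonempty,
    fun j j' hjj' => P.disjoint (hB j) (hB j') fun h => hjj' (e.symm.injective (Subtype.ext h)),
    ?_, fun j => ⟨n, hn, (hP _ (hB j)).1⟩, fun i => ?_, fun j i hi => ((hP _ (hB j)).2.2 i hi).1,
    fun j => (hP _ (hB j)).2.1.sum_eq_zero, fun j => (hP _ (hB j)).2.1.sum_ne_zero, fun i => ?_⟩
  · refine eq_univ_of_forall fun i => mem_biUnion.2 ⟨e ⟨_, (hpart i).1⟩, mem_univ _, ?_⟩
    simp [(hpart i).2]
  · obtain ⟨N, hN, hνN⟩ := hsmooth i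
    exact ⟨N, Nat.pos_of_ne_zero hN.1, hνN⟩
  · obtain ⟨N, hN, hνN⟩ := hsmooth i
    refine ⟨N, Nat.pos_of_ne_zero hN.1, hνN, fun p hp hpN => ⟨e ⟨_, (hpart i).1⟩, ?_⟩⟩
    simpa [Nat.lt_succ_iff] using Nat.mem_smoothNumbers'.1 hN p hp hpN

/-- **Mann's theorem** on vanishing sums of roots of unity: every vanishing sum
`∑ aᵢ ηᵢ = 0` with nonzero integer coefficients decomposes, along a partition of the
index set into nonempty blocks, into rotated minimal vanishing sums `ζⱼ ∑_{i ∈ Bⱼ} aᵢ νᵢ`,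
where the orders of the roots of unity `νᵢ` only involve primes `p ≤ max_j |Bⱼ|`. -/
theorem mann_vanishing_sum (k : ℕ) (hk : 1 ≤ k) (a : Fin k → ℤ) (ha : ∀ i, a i ≠ 0)
    (η : Fin k → ℂ) (hη : ∀ i, IsRootOfUnity (η i))
    (hsum : ∑ i : Fin k, (a i : ℂ) * η i = 0) :
    ∃ (u : ℕ) (B : Fin u → Finset (Fin k)) (ζ : Fin u → ℂ) (ν : Fin k → ℂ),
      (∀ j, (B j).Nonempty) ∧
      (∀ j j', j ≠ j' → Disjoint (B j) (B j')) ∧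
      (Finset.univ.biUnion B = Finset.univ) ∧
      (∀ j, IsRootOfUnity (ζ j)) ∧
      (∀ i, IsRootOfUnity (ν i)) ∧
      (∀ j, ∀ i ∈ B j, η i = ζ j * ν i) ∧
      (∀ j, ∑ i ∈ B j, (a i : ℂ) * ν i = 0) ∧
      (∀ j, ∀ S ⊆ B j, S.Nonempty → S ≠ B j → ∑ i ∈ S, (a i : ℂ) * ν i ≠ 0) ∧
      (∀ i, ∃ n : ℕ, 0 < n ∧ ν i ^ n = 1 ∧
        ∀ p : ℕ, p.Prime → p ∣ n → ∃ j, p ≤ (B j).card) :=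
  mann_vanishing_sum_general k a η hη hsum
end

section
/- If η_1, η_2, η_3, η_4 are roots of unity with η_1 + η_2 + η_3 + η_4 = 0, then the four terms split into two vanishing pairs: there is a partition of {1,2,3,4} into two two-element sets {i_1,i_2} and {i_3,i_4} with η_{i_1} + η_{i_2} = 0 and η_{i_3} + η_{i_4} = 0. In particular, there is no minimal vanishing sum of roots of unity (with all coefficients equal to 1) of length 4. -/
open ComplexConjugate

theorem IsRootOfUnity.norm_eq_one {z : ℂ} (hz : IsRootOfUnity z) : ‖z‖ = 1 := by
  obtain ⟨n, hn, hzn⟩ := hz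
  exact Complex.norm_eq_one_of_pow_eq_one hzn hn.ne'

namespace Complex

theorem mul_conj_of_norm_eq_one {z : ℂ} (hz : ‖z‖ = 1) : z * conj z = 1 := by
  rw [mul_conj', hz, ofReal_one, one_pow]

theorem conj_add_mul_mul_eq_add {a b : ℂ} (ha : ‖a‖ = 1) (hb : ‖b‖ = 1) :
    conj (a + b) * (a * b) = a + b := by
  rw [map_add]
  linear_combination b * mul_conj_of_norm_eq_one ha + a * mul_conj_of_norm_eq_one hb

theorem mul_eq_mul_of_add_eq_neg_add {a b c d : ℂ} (ha : ‖a‖ = 1) (hb : ‖b‖ = 1)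
    (hc : ‖c‖ = 1) (hd : ‖d‖ = 1) (hab : a + b ≠ 0) (hsum : c + d = -(a + b)) :
    a * b = c * d := by
  have hcd : conj (a + b) * (c * d) = a + b := by
    have h := conj_add_mul_mul_eq_add hc hd
    rw [hsum, map_neg] at h
    linear_combination -h
  have hconj : conj (a + b) ≠ 0 := (map_ne_zero _).mpr hab
  exact mul_left_cancel₀ hconj ((conj_add_mul_mul_eq_add ha hb).trans hcd.symm)

theorem add_eq_zero_pairs_of_norm_eq_one {a b c d : ℂ} (ha : ‖a‖ = 1) (hb : ‖b‖ = 1)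
    (hc : ‖c‖ = 1) (hd : ‖d‖ = 1) (hsum : a + b + c + d = 0) :
    (a + b = 0 ∧ c + d = 0) ∨ (a + c = 0 ∧ b + d = 0) ∨ (a + d = 0 ∧ b + c = 0) := by
  by_cases hab : a + b = 0
  · exact Or.inl ⟨hab, by linear_combination hsum - hab⟩
  have hprod : a * b = c * d :=
    mul_eq_mul_of_add_eq_neg_add ha hb hc hd hab (by linear_combination hsum)
  have hfac : (a + c) * (b + c) = 0 := by linear_combination hprod + c * hsum
  rcases mul_eq_zero.mp hfac with hac | hbc
  · exact Or.inr (Or.inl ⟨hac, by linear_combination hsum - hac⟩)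
  · exact Or.inr (Or.inr ⟨by linear_combination hsum - hbc, hbc⟩)

end Complex

theorem exists_pair_sum_eq_zero {ι : Type*} [Fintype ι] [DecidableEq ι] {η : ι → ℂ} {i j : ι}
    (hij : i ≠ j) (hcard : 2 < Fintype.card ι) (h : η i + η j = 0) :
    ∃ S : Finset ι, S.Nonempty ∧ S ≠ Finset.univ ∧ ∑ k ∈ S, η k = 0 := by
  refine ⟨{i, j}, Finset.insert_nonempty _ _, fun hS => ?_, by rw [Finset.sum_pair hij, h]⟩
  have hcard' := congrArg Finset.card hS
  rw [Finset.card_pair hij, Finset.card_univ] at hcard'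
  omega

/-- A vanishing sum of four roots of unity splits into two vanishing pairs; in
particular there is no minimal vanishing sum of roots of unity (with all
coefficients equal to `1`) of length four. -/
theorem vanishing_sum_length_four_splits (η : Fin 4 → ℂ)
    (hη : ∀ i, IsRootOfUnity (η i))
    (hsum : η 0 + η 1 + η 2 + η 3 = 0) :
    ((η 0 + η 1 = 0 ∧ η 2 + η 3 = 0) ∨
     (η 0 + η 2 = 0 ∧ η 1 + η 3 = 0) ∨
     (η 0 + η 3 = 0 ∧ η 1 + η 2 = 0)) ∧
    ∃ S : Finset (Fin 4), S.Nonempty ∧ S ≠ Finset.univ ∧ ∑ i ∈ S, η i = 0 := by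
  have hpairs := Complex.add_eq_zero_pairs_of_norm_eq_one (hη 0).norm_eq_one
    (hη 1).norm_eq_one (hη 2).norm_eq_one (hη 3).norm_eq_one hsum
  refine ⟨hpairs, ?_⟩
  rcases hpairs with ⟨h, -⟩ | ⟨h, -⟩ | ⟨h, -⟩ <;>
    exact exists_pair_sum_eq_zero (by decide) (by simp) h
end

section
/- (Uniform ambiguities, Manikas–Proukakis) Let r = (r_1,...,r_M) ∈ ℝ^M with M ≥ 2 be a linear array and fix indices i ≠ j in {1,...,M} with D := |r_i − r_j| > 0. For each integer c with 0 ≤ c < D define the electrical angle Φ_c := −π(1 − 2c/D). Suppose the number of such integers c is at least M. Then for any choice of M distinct integers c_1 < c_2 < ... < c_M with 0 ≤ c_l < D, the M×M steering matrix A with entries A_{m,l} = exp(𝕚·r_m·Φ_{c_l}) is singular, i.e., (Φ_{c_1},...,Φ_{c_M}) is an ambiguous vector of electrical angles. (In fact, rows i and j of A are proportional.) -/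
open Real Complex

/-- **Uniform ambiguities (Manikas–Proukakis).**  For a linear array `r` and indices
`i ≠ j` with `D = |r i - r j| > 0`, if there are at least `M` integers `c` with
`0 ≤ c < D` (i.e. `M ≤ ⌈D⌉`), then for any `M` distinct such integers
`c 0 < c 1 < ⋯ < c (M-1)` the steering matrix at the electrical angles
`Φ_c = -π (1 - 2 c / D)` is singular; in fact its rows `i` and `j` are
proportional. -/
theorem uniform_ambiguities (M : ℕ) (hM : 2 ≤ M) (r : Fin M → ℝ)
    (i j : Fin M) (hij : i ≠ j) (D : ℝ) (hD : D = |r i - r j|) (hDpos : 0 < D)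
    (hcount : M ≤ ⌈D⌉₊)
    (c : Fin M → ℕ) (hc : StrictMono c) (hcD : ∀ l : Fin M, (c l : ℝ) < D) :
    Matrix.det (Matrix.of fun m l : Fin M =>
      Complex.exp (Complex.I * (r m : ℂ) *
        ((-π * (1 - 2 * (c l : ℝ) / D) : ℝ) : ℂ))) = 0 ∧
    ∃ t : ℂ, ∀ l : Fin M,
      Complex.exp (Complex.I * (r i : ℂ) * ((-π * (1 - 2 * (c l : ℝ) / D) : ℝ) : ℂ)) =
        t * Complex.exp (Complex.I * (r j : ℂ) *
          ((-π * (1 - 2 * (c l : ℝ) / D) : ℝ) : ℂ)) := by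
  set t : ℂ := Complex.exp (-Complex.I * (π : ℂ) * ((r i : ℂ) - (r j : ℂ))) with ht
  have hD0 : (D : ℂ) ≠ 0 := by exact_mod_cast hDpos.ne'
  have key : ∀ l : Fin M,
      Complex.exp (Complex.I * (r i : ℂ) * ((-π * (1 - 2 * (c l : ℝ) / D) : ℝ) : ℂ)) =
        t * Complex.exp (Complex.I * (r j : ℂ) *
          ((-π * (1 - 2 * (c l : ℝ) / D) : ℝ) : ℂ)) := by
    intro l
    rw [ht, ← Complex.exp_add, Complex.exp_eq_exp_iff_exists_int]
    rcases le_or_gt (r j) (r i) with h | h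
    · refine ⟨(c l : ℤ), ?_⟩
      have hDr : D = r i - r j := by rw [hD, _root_.abs_of_nonneg (by linarith)]
      have hDc : (D : ℂ) = (r i : ℂ) - (r j : ℂ) := by
        rw [hDr]; push_cast; ring
      have hne : (r i : ℂ) - (r j : ℂ) ≠ 0 := hDc ▸ hD0
      push_cast
      rw [hDc]
      field_simp
      ring
    · refine ⟨-(c l : ℤ), ?_⟩
      have hDr : D = r j - r i := by rw [hD, _root_.abs_of_nonpos (by linarith)]; ring
      have hDc : (D : ℂ) = (r j : ℂ) - (r i : ℂ) := by
        rw [hDr]; push_cast; ring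
      have hne : (r j : ℂ) - (r i : ℂ) ≠ 0 := hDc ▸ hD0
      push_cast
      rw [hDc]
      field_simp
      ring
  refine ⟨?_, t, key⟩
  set A : Matrix (Fin M) (Fin M) ℂ := Matrix.of fun m l : Fin M =>
      Complex.exp (Complex.I * (r m : ℂ) *
        ((-π * (1 - 2 * (c l : ℝ) / D) : ℝ) : ℂ)) with hA
  rw [← Matrix.det_updateRow_add_smul_self A hij (-t)]
  apply Matrix.det_eq_zero_of_row_eq_zero i
  intro l
  rw [Matrix.updateRow_self]
  have := key l
  simp only [hA, Matrix.of_apply, Pi.add_apply, Pi.smul_apply, smul_eq_mul] at *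
  rw [this]
  ring
end

section
/- Every thinned (non-uniform) integer linear array suffers from ambiguities: let r = (r_1,...,r_M) ∈ ℤ^M with M ≥ 2, 0 = r_1 < r_2 < ... < r_M, and r_M ≥ M (i.e., r is not the uniform linear array (0,1,...,M−1)). Then there exist M pairwise distinct electrical angles Φ_1 < Φ_2 < ... < Φ_M in [−π, π) such that the M×M steering matrix A with entries A_{m,l} = exp(𝕚·r_m·Φ_l) is singular. -/
open Real Complex

/-- Every thinned (non-uniform) integer linear array suffers from ambiguities:
if `0 = r 0 < r 1 < ⋯ < r (M-1)` are integers with `r (M-1) ≥ M`, then there exist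
`M` pairwise distinct electrical angles `Φ 0 < ⋯ < Φ (M-1)` in `[-π, π)` whose
steering matrix is singular. -/
theorem thinned_array_has_ambiguity (M : ℕ) (hM : 2 ≤ M) (r : Fin M → ℤ)
    (hr : StrictMono r) (h0 : r ⟨0, by omega⟩ = 0)
    (hlast : (M : ℤ) ≤ r ⟨M - 1, by omega⟩) :
    ∃ Φ : Fin M → ℝ, StrictMono Φ ∧ (∀ l, -π ≤ Φ l ∧ Φ l < π) ∧
      Matrix.det (Matrix.of fun m l : Fin M =>
        Complex.exp (Complex.I * (r m : ℂ) * ((Φ l : ℝ) : ℂ))) = 0 := by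
  set i0 : Fin M := ⟨0, by omega⟩
  set i1 : Fin M := ⟨M - 1, by omega⟩
  set N : ℤ := r i1 with hNdef
  have hN : (M : ℤ) ≤ N := hlast
  have hNpos : (0 : ℤ) < N := lt_of_lt_of_le (by exact_mod_cast Nat.lt_of_lt_of_le (by norm_num) hM) hN
  have hNR : (0 : ℝ) < (N : ℝ) := by exact_mod_cast hNpos
  refine ⟨fun l => -π + 2 * π * (l : ℕ) / N, ?_, ?_, ?_⟩
  · intro a b hab
    have : ((a : ℕ) : ℝ) < ((b : ℕ) : ℝ) := by exact_mod_cast hab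
    have h2 : 2 * π * ((a : ℕ) : ℝ) / N < 2 * π * ((b : ℕ) : ℝ) / N := by
      have hπ := Real.pi_pos
      gcongr
    linarith
  · intro l
    constructor
    · have : (0:ℝ) ≤ 2 * π * (l : ℕ) / N := by positivity
      linarith
    · have hl : ((l : ℕ) : ℝ) < (N : ℝ) := by
        have : (l : ℕ) < M := l.isLt
        have : ((l : ℕ) : ℤ) < N := lt_of_lt_of_le (by exact_mod_cast this) hN
        exact_mod_cast this
      have : 2 * π * ((l : ℕ) : ℝ) / N < 2 * π := by
        rw [div_lt_iff₀ hNR]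
        have := Real.pi_pos
        nlinarith
      linarith
  · rw [← Matrix.exists_vecMul_eq_zero_iff]
    set c : ℂ := Complex.exp (-(π : ℂ) * N * Complex.I)
    refine ⟨Pi.single i0 c - Pi.single i1 1, ?_, ?_⟩
    · intro h
      have h01 : i0 ≠ i1 := by
        simp only [i0, i1, ne_eq, Fin.mk.injEq]
        omega
      have := congrFun h i1
      simp [Pi.single_apply, h01, h01.symm] at this
    · funext l
      have hA0 : (Matrix.of fun m l : Fin M =>
          Complex.exp (Complex.I * (r m : ℂ) * ((-π + 2 * π * (l : ℕ) / N : ℝ) : ℂ))) i0 l = 1 := by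
        simp [h0]
      have hA1 : (Matrix.of fun m l : Fin M =>
          Complex.exp (Complex.I * (r m : ℂ) * ((-π + 2 * π * (l : ℕ) / N : ℝ) : ℂ))) i1 l = c := by
        simp only [Matrix.of_apply, ← hNdef]
        have hNne : (N : ℂ) ≠ 0 := by exact_mod_cast hNpos.ne'
        have hcast : ((-π + 2 * π * (l : ℕ) / N : ℝ) : ℂ) = -(π:ℂ) + 2 * π * (l : ℕ) / N := by
          push_cast; ring
        rw [hcast]
        have : Complex.I * (N : ℂ) * (-(π:ℂ) + 2 * π * (l : ℕ) / N)
            = -(π : ℂ) * N * Complex.I + ((l : ℕ) : ℂ) * (2 * π * Complex.I) := by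
          field_simp
        rw [this, Complex.exp_add]
        have : Complex.exp (((l : ℕ) : ℂ) * (2 * π * Complex.I)) = 1 := by
          exact_mod_cast Complex.exp_int_mul_two_pi_mul_I (l : ℕ)
        rw [this, mul_one]
      have h01 : i0 ≠ i1 := by
        simp only [i0, i1, ne_eq, Fin.mk.injEq]; omega
      simp only [Matrix.vecMul, dotProduct, Pi.sub_apply, Pi.single_apply, sub_mul,
        ite_mul, one_mul, zero_mul, Finset.sum_sub_distrib, Finset.sum_ite_eq',
        Finset.mem_univ, if_true]
      rw [hA0, hA1]
      simp [Pi.zero_apply]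
end

section
/- For every v ∈ (0,1), the vector of electrical angles (Φ_1, Φ_2, Φ_3, Φ_4) = (−π, −π·v, 0, π·v) is an ambiguous vector for the linear array r = (0,1,3,4): the four angles are pairwise distinct, and the 4×4 steering matrix A with entries A_{m,l} = exp(𝕚·r_m·Φ_l), r = (0,1,3,4), has determinant 0. -/
open Real Complex Matrix

/-!
The array `r = (0, 1, 3, 4)` is symmetric under `r ↦ 4 - r`, so for `w = exp (𝕚φ)` the combination
`w⁴ a(-φ) + a(φ) = (1 + w⁴, w + w³, w³ + w, w⁴ + 1)` is a palindrome. So are `a(-π) = (1, -1, -1, 1)`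
and `a(0) = (1, 1, 1, 1)`, and the palindromes of length four form a plane; hence the steering
vectors of `-π, -φ, 0, φ` are linearly dependent for every `φ`.
-/

noncomputable def steeringMatrix {M L : ℕ} (r : Fin M → ℝ) (Φ : Fin L → ℝ) :
    Matrix (Fin M) (Fin L) ℂ :=
  Matrix.of fun m l => cexp (I * r m * Φ l)

lemma cexp_I_mul_natCast_mul (n : ℕ) (x : ℝ) : cexp (I * (n : ℝ) * x) = cexp (I * x) ^ n := by
  rw [← Complex.exp_nat_mul]
  push_cast
  ring_nf

lemma steeringMatrix_mulVec_apply_of_natCast {M : ℕ} (r : Fin M → ℕ) (φ : ℝ) (c : Fin 4 → ℂ)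
    (m : Fin M) :
    (steeringMatrix (fun m => (r m : ℝ)) ![-π, -φ, 0, φ] *ᵥ c) m =
      (-1) ^ r m * c 0 + (cexp (I * φ) ^ r m)⁻¹ * c 1 + c 2 + cexp (I * φ) ^ r m * c 3 := by
  have h_neg_pi : cexp (I * (-π : ℝ)) = -1 := by
    rw [← Complex.exp_neg_pi_mul_I]; push_cast; ring_nf
  have h_neg : cexp (I * (-φ : ℝ)) = (cexp (I * φ))⁻¹ := by
    rw [← Complex.exp_neg]; push_cast; ring_nf
  simp only [steeringMatrix, mulVec, dotProduct, Fin.sum_univ_four, of_apply,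
    cexp_I_mul_natCast_mul, cons_val_zero, cons_val_one, h_neg_pi, h_neg, inv_pow]
  simp

lemma det_steeringMatrix_0134 (φ : ℝ) :
    (steeringMatrix ![0, 1, 3, 4] ![-π, -φ, 0, φ]).det = 0 := by
  set w := cexp (I * φ)
  have hw : w ≠ 0 := Complex.exp_ne_zero _
  have hr : (![0, 1, 3, 4] : Fin 4 → ℝ) = fun m => ((![0, 1, 3, 4] : Fin 4 → ℕ) m : ℝ) := by
    ext m; fin_cases m <;> simp
  -- `2 (w⁴ a(-φ) + a(φ)) = (w⁴ - w³ - w + 1) a(-π) + (w⁴ + w³ + w + 1) a(0)`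
  refine exists_mulVec_eq_zero_iff.mp
    ⟨![w ^ 4 - w ^ 3 - w + 1, -2 * w ^ 4, w ^ 4 + w ^ 3 + w + 1, -2], ?_, ?_⟩
  · intro h
    simpa using congrFun h 3
  ext m
  rw [hr, steeringMatrix_mulVec_apply_of_natCast]
  fin_cases m <;>
  · simp only [Fin.zero_eta, Fin.mk_one, Fin.reduceFinMk, cons_val, cons_val_zero, cons_val_one,
      Pi.zero_apply]
    field_simp
    ring

lemma strictMono_neg_pi_neg_zero {φ : ℝ} (hφ₀ : 0 < φ) (hφπ : φ < π) :
    StrictMono ![-π, -φ, 0, φ] := by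
  rw [Fin.strictMono_iff_lt_succ]
  intro i
  fin_cases i
  · exact neg_lt_neg hφπ
  · exact neg_lt_zero.mpr hφ₀
  · exact hφ₀

/-- For every `v ∈ (0,1)` the vector of electrical angles `(-π, -πv, 0, πv)` is an
ambiguous vector for the linear array `r = (0,1,3,4)`: the four angles are pairwise
distinct and the steering matrix has determinant `0`. -/
theorem ambiguity_0134_class_one (v : ℝ) (hv0 : 0 < v) (hv1 : v < 1) :
    Function.Injective (![-π, -π * v, 0, π * v] : Fin 4 → ℝ) ∧
    Matrix.det (Matrix.of fun m l : Fin 4 =>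
      Complex.exp (Complex.I * ((![0, 1, 3, 4] m : ℝ) : ℂ) *
        (((![-π, -π * v, 0, π * v] : Fin 4 → ℝ) l : ℝ) : ℂ))) = 0 := by
  rw [neg_mul]
  have hφ₀ : 0 < π * v := mul_pos pi_pos hv0
  have hφπ : π * v < π := mul_lt_of_lt_one_right pi_pos hv1
  exact ⟨(strictMono_neg_pi_neg_zero hφ₀ hφπ).injective, det_steeringMatrix_0134 (π * v)⟩
end

section
/- Let r = (0,1,2,3,4,5,6,7,8,9,10,12) and let w_1,...,w_6 be complex numbers of modulus 1. Let z_1,...,z_12 be the twelve numbers w_1, −w_1, w_2, −w_2, ..., w_6, −w_6. Then the 12×12 steering matrix A with entries A_{m,l} = z_l^{r_m} is singular. (Each pair {w_k, −w_k} corresponds to a pair of electrical angles of the form (π(v−1), π·v); the twelve angles obtained from six such pairs always form an ambiguous vector for the array r.) -/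
/-!
Weight the antipodal columns `w_k`, `-w_k` by `c_k`, `-c_k`. In a row with exponent `r` the pair
contributes `(1 - (-1)^r) w_k^r c_k`, so every even-exponent row vanishes, and the odd-exponent
rows impose only as many linear conditions on `c` as there are odd exponents. The array
`(0,1,…,10,12)` has five odd exponents but six pairs, so a nonzero `c` exists.
-/

open Finset Matrix

theorem Matrix.exists_mulVec_eq_zero_of_card_lt {m n K : Type*} [Fintype m] [Fintype n] [Field K]
    (B : Matrix m n K) (h : Fintype.card m < Fintype.card n) : ∃ v ≠ 0, B *ᵥ v = 0 := by
  obtain ⟨v, hv, hv0⟩ := (Submodule.ne_bot_iff _).mp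
    (LinearMap.ker_ne_bot_of_finrank_lt (f := B.mulVecLin) (by simpa using h))
  exact ⟨v, hv0, hv⟩

theorem Fin.sum_univ_two_mul {M : Type*} [AddCommMonoid M] {n : ℕ} (f : Fin (2 * n) → M) :
    ∑ i, f i = ∑ k : Fin n, (f ⟨2 * k, by omega⟩ + f ⟨2 * k + 1, by omega⟩) := by
  rw [← (finProdFinEquiv.trans (finCongr (Nat.mul_comm n 2))).sum_comp, Fintype.sum_prod_type]
  refine Fintype.sum_congr _ _ fun k => ?_
  rw [Fin.sum_univ_two]
  congr 2 <;> ext <;> simp [finProdFinEquiv, Nat.mul_comm, Nat.add_comm]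

theorem pow_mul_add_neg_pow_mul_neg {R : Type*} [CommRing R] (w c : R) (r : ℕ) :
    w ^ r * c + (-w) ^ r * -c = (1 - (-1) ^ r) * (w ^ r * c) := by
  rw [neg_pow]; ring

theorem det_pow_eq_zero_of_antipodal_pairs {K : Type*} [Field K] {n : ℕ} (r : Fin (2 * n) → ℕ)
    (w : Fin n → K) (z : Fin (2 * n) → K)
    (hz : ∀ k : Fin n, z ⟨2 * k, by omega⟩ = w k ∧ z ⟨2 * k + 1, by omega⟩ = -w k)
    (hodd : #{m | Odd (r m)} < n) :
    (of fun m l => z l ^ r m).det = 0 := by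
  obtain ⟨c, hc0, hc⟩ := exists_mulVec_eq_zero_of_card_lt
    (of fun (m : {m // Odd (r m)}) k => w k ^ r m) (by simpa [Fintype.card_subtype] using hodd)
  let v : Fin (2 * n) → K := fun i => (-1) ^ (i : ℕ) * c ⟨i / 2, by omega⟩
  have hv (k : Fin n) : v ⟨2 * k, by omega⟩ = c k ∧ v ⟨2 * k + 1, by omega⟩ = -c k := by
    constructor <;> simp [v, pow_succ, Nat.add_div_of_dvd_right]
  refine exists_mulVec_eq_zero_iff.mp ⟨v, fun h => hc0 (funext fun k => ?_), funext fun m => ?_⟩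
  · simpa [(hv k).1] using congrFun h ⟨2 * k, by omega⟩
  · have hrow : ((of fun m l => z l ^ r m) *ᵥ v) m =
        (1 - (-1) ^ r m) * ∑ k, w k ^ r m * c k := by
      simp only [mulVec, dotProduct, of_apply, Fin.sum_univ_two_mul, (hz _).1, (hz _).2, (hv _).1,
        (hv _).2, pow_mul_add_neg_pow_mul_neg, mul_sum]
    rcases Nat.even_or_odd (r m) with he | ho
    · simp [hrow, he.neg_one_pow]
    · exact hrow ▸ mul_eq_zero_of_right _ (congrFun hc ⟨m, ho⟩)

/-- For the linear array `r = (0,1,2,3,4,5,6,7,8,9,10,12)`, any six pairs of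
antipodal unimodular numbers `{w k, -w k}` (corresponding to six pairs of electrical
angles of the form `(π(v-1), πv)`) yield a singular `12×12` steering matrix, i.e. an
ambiguous vector of twelve electrical angles. -/
theorem ambiguity_big_array (w : Fin 6 → ℂ)
    (z : Fin 12 → ℂ)
    (hz : ∀ k : Fin 6,
      z ⟨2 * (k : ℕ), by have := k.isLt; omega⟩ = w k ∧
      z ⟨2 * (k : ℕ) + 1, by have := k.isLt; omega⟩ = -w k) :
    Matrix.det (Matrix.of fun m l : Fin 12 =>
      z l ^ (![0, 1, 2, 3, 4, 5, 6, 7, 8, 9, 10, 12] m : ℕ)) = 0 :=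
  det_pow_eq_zero_of_antipodal_pairs (n := 6) _ w z hz (by decide)
end
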